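/- arXiv:1806.03346 — 12 statements merged into one kernel-verified Lean document; each statement's English description precedes it below -/
import Mathlib

section
/- Σ_{n=1}^∞ (-1)^{n-1} / ((2n−1)(2n+1)(2n+3)) = π/8 − 1/3. -/
open Real Filter Finset Topology

noncomputable def Lz (N : ℕ) : ℝ := ∑ i ∈ Finset.range N, (-1 : ℝ) ^ i / (2 * i + 1)

lemma partial_sum_eq (N : ℕ) :
    ∑ n ∈ Finset.range N, (-1 : ℝ) ^ n /
      ((2 * (n : ℝ) + 1) * (2 * (n : ℝ) + 3) * (2 * (n : ℝ) + 5)) =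
      (1/8) * Lz N + (1/4) * Lz (N+1) + (1/8) * Lz (N+2) - 1/3 := by
  induction N with
  | zero =>
    simp [Lz, Finset.sum_range_succ]
    norm_num
  | succ N ih =>
    rw [Finset.sum_range_succ, ih]
    have h1 : Lz (N+1) = Lz N + (-1:ℝ)^N / (2*N+1) := by
      simp [Lz, Finset.sum_range_succ]
    have h2 : Lz (N+2) = Lz (N+1) + (-1:ℝ)^(N+1) / (2*(N+1)+1) := by
      simp [Lz, Finset.sum_range_succ]
    have h3 : Lz (N+3) = Lz (N+2) + (-1:ℝ)^(N+2) / (2*(N+2)+1) := by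
      simp [Lz, Finset.sum_range_succ]
    rw [h3, h2, h1]
    have e1 : (-1:ℝ)^(N+1) = -(-1:ℝ)^N := by ring
    have e2 : (-1:ℝ)^(N+2) = (-1:ℝ)^N := by ring
    rw [e1, e2]
    have p1 : (2*(N:ℝ)+1) ≠ 0 := by positivity
    have p2 : (2*(N:ℝ)+3) ≠ 0 := by positivity
    have p3 : (2*(N:ℝ)+5) ≠ 0 := by positivity
    -- push_cast
    field_simp
    ring

lemma summable_aux : Summable (fun n : ℕ =>
    (-1 : ℝ) ^ n / ((2 * (n : ℝ) + 1) * (2 * (n : ℝ) + 3) * (2 * (n : ℝ) + 5))) := by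
  have hg : Summable (fun n : ℕ => 1 / ((n:ℝ)+1)^2) := by
    have : Summable (fun n : ℕ => 1 / ((n:ℝ))^2) := by
      simpa using Real.summable_one_div_nat_pow.mpr (by norm_num : 1 < 2)
    have := (summable_nat_add_iff 1).mpr this
    simpa using this
  refine Summable.of_norm (Summable.of_nonneg_of_le (fun n => norm_nonneg _) (fun n => ?_) hg)
  have p1 : (0:ℝ) < 2*(n:ℝ)+1 := by positivity
  have p2 : (0:ℝ) < 2*(n:ℝ)+3 := by positivity
  have p3 : (0:ℝ) < 2*(n:ℝ)+5 := by positivity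
  have h : ‖(-1 : ℝ) ^ n / ((2 * (n : ℝ) + 1) * (2 * (n : ℝ) + 3) * (2 * (n : ℝ) + 5))‖
      = 1 / ((2 * (n : ℝ) + 1) * (2 * (n : ℝ) + 3) * (2 * (n : ℝ) + 5)) := by
    rw [norm_div, norm_pow, norm_neg, norm_one, one_pow]
    rw [Real.norm_eq_abs, abs_of_pos (by positivity)]
  rw [h]
  apply div_le_div_of_nonneg_left (by norm_num) (by positivity)
  nlinarith [sq_nonneg ((n:ℝ)+1)]

/-- Σ_{n=1}^∞ (-1)^{n-1} / ((2n−1)(2n+1)(2n+3)) = π/8 − 1/3.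
(The summation index is shifted: `n : ℕ` here corresponds to `n + 1` in the statement.) -/
theorem sum_alt_three_linear_factors :
    ∑' n : ℕ, (-1 : ℝ) ^ n / ((2 * (n : ℝ) + 1) * (2 * (n : ℝ) + 3) * (2 * (n : ℝ) + 5)) =
      π / 8 - 1 / 3 := by
  set f : ℕ → ℝ := fun n =>
    (-1 : ℝ) ^ n / ((2 * (n : ℝ) + 1) * (2 * (n : ℝ) + 3) * (2 * (n : ℝ) + 5)) with hf
  have hsum : Summable f := summable_aux
  have hts : Tendsto (fun N => ∑ n ∈ Finset.range N, f n) atTop (𝓝 (∑' n, f n)) :=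
    hsum.hasSum.tendsto_sum_nat
  have hL : Tendsto Lz atTop (𝓝 (π/4)) := Real.tendsto_sum_pi_div_four
  have hL1 : Tendsto (fun N => Lz (N+1)) atTop (𝓝 (π/4)) :=
    hL.comp (tendsto_add_atTop_nat 1)
  have hL2 : Tendsto (fun N => Lz (N+2)) atTop (𝓝 (π/4)) :=
    hL.comp (tendsto_add_atTop_nat 2)
  have hts' : Tendsto (fun N => ∑ n ∈ Finset.range N, f n) atTop (𝓝 (π/8 - 1/3)) := by
    have : Tendsto (fun N => (1/8) * Lz N + (1/4) * Lz (N+1) + (1/8) * Lz (N+2) - 1/3)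
        atTop (𝓝 ((1/8) * (π/4) + (1/4) * (π/4) + (1/8) * (π/4) - 1/3)) :=
      (((hL.const_mul _).add (hL1.const_mul _)).add (hL2.const_mul _)).sub_const _
    have heq : (1/8) * (π/4) + (1/4) * (π/4) + (1/8) * (π/4) - 1/3 = π/8 - 1/3 := by ring
    rw [heq] at this
    exact this.congr fun N => (partial_sum_eq N).symm
  exact tendsto_nhds_unique hts hts'
end

section
/- Σ_{n=1}^∞ (-1)^{n-1} / ((2n−1)(2n+1)(2n+3)(2n+5)(2n+7)) = π/96 − 2/63. -/
/-!
Partial fractions give `384 / ((x+1)(x+3)(x+5)(x+7)(x+9)) = Σₖ (-1)ᵏ C(4,k) / (x+2k+1)`, so after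
absorbing the sign the summand is `Σₖ C(4,k) ℓ(n+k) / 384` with `ℓ i = (-1)ⁱ / (2i+1)` the Leibniz
term. The Leibniz series converges only conditionally, so we work with partial sums: the `k`-shifted
one tends to `π/4 - Σ_{i<k} ℓ i`, and summing with weights `C(4,k)` gives
`(16 · π/4 - 256/21) / 384 = π/96 - 2/63`.
-/

open Real Filter Finset Topology

theorem tendsto_sum_range_add_of_tendsto {G : Type*} [AddCommGroup G] [TopologicalSpace G]
    [IsTopologicalAddGroup G] {g : ℕ → G} {l : G}
    (h : Tendsto (fun N ↦ ∑ i ∈ range N, g i) atTop (𝓝 l)) (k : ℕ) :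
    Tendsto (fun N ↦ ∑ n ∈ range N, g (n + k)) atTop (𝓝 (l - ∑ i ∈ range k, g i)) := by
  have hshift (N : ℕ) :
      ∑ n ∈ range N, g (n + k) = ∑ i ∈ range (N + k), g i - ∑ i ∈ range k, g i := by
    rw [add_comm N k, sum_range_add]
    simp [add_comm]
  simpa only [hshift, Function.comp_def] using (h.comp (tendsto_add_atTop_nat k)).sub_const _

noncomputable def leibnizTerm (i : ℕ) : ℝ := (-1) ^ i / (2 * i + 1)

noncomputable def altFiveFactorsTerm (n : ℕ) : ℝ :=
  (-1) ^ n / ((2 * (n : ℝ) + 1) * (2 * n + 3) * (2 * n + 5) * (2 * n + 7) * (2 * n + 9))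

lemma altFiveFactorsTerm_eq (n : ℕ) :
    altFiveFactorsTerm n =
      (leibnizTerm n + 4 * leibnizTerm (n + 1) + 6 * leibnizTerm (n + 2) +
        4 * leibnizTerm (n + 3) + leibnizTerm (n + 4)) / 384 := by
  simp only [altFiveFactorsTerm, leibnizTerm, pow_succ, Nat.cast_add, Nat.cast_ofNat,
    Nat.cast_one]
  field_simp
  ring

lemma summable_altFiveFactorsTerm : Summable altFiveFactorsTerm := by
  have hcomp : Summable fun n : ℕ ↦ 1 / ((n : ℝ) + 1) ^ 2 := by
    simpa using (summable_nat_add_iff 1).2 (Real.summable_one_div_nat_pow.2 one_lt_two)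
  refine hcomp.of_norm_bounded fun n ↦ ?_
  rw [altFiveFactorsTerm, norm_div, norm_pow, norm_neg, norm_one, one_pow,
    Real.norm_of_nonneg (by positivity)]
  gcongr
  calc ((n : ℝ) + 1) ^ 2 = (n + 1) * (n + 1) * 1 * 1 * 1 := by ring
    _ ≤ _ := by gcongr <;> linarith

lemma tendsto_sum_range_altFiveFactorsTerm :
    Tendsto (fun N ↦ ∑ n ∈ range N, altFiveFactorsTerm n) atTop (𝓝 (π / 96 - 2 / 63)) := by
  have hshift := tendsto_sum_range_add_of_tendsto (g := leibnizTerm) Real.tendsto_sum_pi_div_four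
  have hlim := ((((hshift 0).add ((hshift 1).const_mul 4)).add ((hshift 2).const_mul 6)).add
    ((hshift 3).const_mul 4)).add (hshift 4) |>.div_const 384
  simp_rw [altFiveFactorsTerm_eq, ← sum_div, sum_add_distrib, ← mul_sum]
  convert hlim using 2
  · simp
  · norm_num [sum_range_succ, leibnizTerm]
    ring

/-- Σ_{n=1}^∞ (-1)^{n-1} / ((2n−1)(2n+1)(2n+3)(2n+5)(2n+7)) = π/96 − 2/63.
(The summation index is shifted: `n : ℕ` here corresponds to `n + 1` in the statement.) -/
theorem sum_alt_five_linear_factors :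
    ∑' n : ℕ, (-1 : ℝ) ^ n /
        ((2 * (n : ℝ) + 1) * (2 * (n : ℝ) + 3) * (2 * (n : ℝ) + 5) * (2 * (n : ℝ) + 7) *
          (2 * (n : ℝ) + 9)) =
      π / 96 - 2 / 63 :=
  (summable_altFiveFactorsTerm.hasSum_iff_tendsto_nat.2
    tendsto_sum_range_altFiveFactorsTerm).tsum_eq
end

section
/- π = 22/7 − 24·Σ_{n=2}^∞ (-1)^{n} / ((2n+1)(2n+2)(2n+3)(2n+4)(2n+5)). -/
/-!
Partial fractions give the fourth finite difference
`24 / (m (m+1) (m+2) (m+3) (m+4)) = 1/m - 4/(m+1) + 6/(m+2) - 4/(m+3) + 1/(m+4)`.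
Put `m = 2n + 5` and sum with signs `(-1)^n`: the odd denominators reassemble, with total
weight `1 - 6 + 1 = -4`, into a tail of the Leibniz series `1 - 1/3 + 1/5 - ⋯ = π/4`, and the
even ones telescope. So the `k`-th partial sum of `24 · series` is `22/7 - 4 · (Leibniz partial
sum) + o(1)`, and its limit is `22/7 - π`.
-/

open Real Filter Finset
open scoped Topology

noncomputable def piSeriesTerm (n : ℕ) : ℝ :=
  (-1 : ℝ) ^ n /
    ((2 * (n : ℝ) + 5) * (2 * (n : ℝ) + 6) * (2 * (n : ℝ) + 7) * (2 * (n : ℝ) + 8) *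
      (2 * (n : ℝ) + 9))

lemma norm_piSeriesTerm_le (n : ℕ) : ‖piSeriesTerm n‖ ≤ 1 / ((n : ℝ) + 1) ^ 5 := by
  rw [piSeriesTerm, norm_div, norm_pow, norm_neg, norm_one, one_pow, norm_of_nonneg (by positivity)]
  apply one_div_le_one_div_of_le (by positivity)
  calc ((n : ℝ) + 1) ^ 5 = (n + 1) * (n + 1) * (n + 1) * (n + 1) * (n + 1) := by ring
    _ ≤ _ := by gcongr <;> linarith

lemma summable_piSeriesTerm : Summable piSeriesTerm :=
  .of_norm_bounded
    ((summable_nat_add_iff 1).mpr (Real.summable_one_div_nat_pow (p := 5).mpr (by norm_num)))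
    (by simpa using norm_piSeriesTerm_le)

lemma sum_range_piSeriesTerm (k : ℕ) :
    ∑ i ∈ range k, 24 * piSeriesTerm i =
      22 / 7 - 4 * ∑ i ∈ range (k + 2), (-1 : ℝ) ^ i / (2 * i + 1) +
        (4 * ((-1) ^ k / (2 * k + 6)) - 5 * ((-1) ^ k / (2 * k + 5)) - (-1) ^ k / (2 * k + 7)) := by
  induction k with
  | zero => norm_num [sum_range_succ]
  | succ k ih =>
    rw [sum_range_succ, ih, sum_range_succ _ (k + 2), piSeriesTerm]
    push_cast
    field_simp
    ring

lemma tendsto_neg_one_pow_div_atTop {f : ℕ → ℝ} (hf : Tendsto f atTop atTop) :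
    Tendsto (fun n ↦ (-1 : ℝ) ^ n / f n) atTop (𝓝 0) := by
  rw [tendsto_zero_iff_norm_tendsto_zero]
  simpa [norm_div] using (tendsto_inv_atTop_zero.comp hf).norm

lemma tendsto_neg_one_pow_div_two_mul_add (c : ℝ) :
    Tendsto (fun n : ℕ ↦ (-1 : ℝ) ^ n / (2 * n + c)) atTop (𝓝 0) :=
  tendsto_neg_one_pow_div_atTop <|
    tendsto_atTop_add_const_right _ c (tendsto_natCast_atTop_atTop.const_mul_atTop two_pos)

lemma tendsto_sum_range_piSeriesTerm :
    Tendsto (fun k ↦ ∑ i ∈ range k, 24 * piSeriesTerm i) atTop (𝓝 (22 / 7 - π)) := by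
  have leibniz : Tendsto (fun k ↦ ∑ i ∈ range (k + 2), (-1 : ℝ) ^ i / (2 * i + 1)) atTop
      (𝓝 (π / 4)) :=
    Real.tendsto_sum_pi_div_four.comp (tendsto_add_atTop_nat 2)
  have error := ((tendsto_neg_one_pow_div_two_mul_add 6).const_mul 4).sub
    ((tendsto_neg_one_pow_div_two_mul_add 5).const_mul 5) |>.sub
    (tendsto_neg_one_pow_div_two_mul_add 7)
  simp only [sum_range_piSeriesTerm]
  convert ((leibniz.const_mul 4).const_sub (22 / 7)).add error using 2
  ring

/-- π = 22/7 − 24·Σ_{n=2}^∞ (-1)^n / ((2n+1)(2n+2)(2n+3)(2n+4)(2n+5)).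
(The summation index is shifted: `n : ℕ` here corresponds to `n + 2` in the statement,
so that `(-1)^{n+2} = (-1)^n`.) -/
theorem pi_eq_twentytwo_sevenths_sub_series :
    π = 22 / 7 -
      24 * ∑' n : ℕ, (-1 : ℝ) ^ n /
        ((2 * (n : ℝ) + 5) * (2 * (n : ℝ) + 6) * (2 * (n : ℝ) + 7) * (2 * (n : ℝ) + 8) *
          (2 * (n : ℝ) + 9)) := by
  have h : 24 * ∑' n, piSeriesTerm n = 22 / 7 - π :=
    tendsto_nhds_unique (summable_piSeriesTerm.hasSum.mul_left 24).tendsto_sum_nat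
      tendsto_sum_range_piSeriesTerm
  unfold piSeriesTerm at h
  linarith
end

section
/- The continued fraction with integer part b_0 = 10, partial numerators a_n = (2n−1)(2n+3) for n ≥ 1, and partial denominators b_n = 10 for n ≥ 1 converges to 6/(10 − 3π); that is, the convergents p_n/q_n defined by p_{-1}=1, q_{-1}=0, p_0=10, q_0=1, p_n = 10p_{n-1} + (2n−1)(2n+3)p_{n-2}, q_n = 10q_{n-1} + (2n−1)(2n+3)q_{n-2} satisfy lim_{n→∞} p_n/q_n = 6/(10 − 3π). -/
open Real Filter

noncomputable def cfA (n : ℕ) : ℝ := ∑ i ∈ Finset.range n, (-1 : ℝ) ^ i / (2 * i + 1)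

noncomputable def cfS (n : ℕ) : ℝ :=
  5 / 3 - 2 * cfA n +
    (-1 : ℝ) ^ n * (1 / ((n : ℝ) + 1) - 5 / (2 * (2 * (n : ℝ) + 1)) - 1 / (2 * (2 * (n : ℝ) + 3)))

noncomputable def cfF (n : ℕ) : ℝ := ∏ k ∈ Finset.range (n + 2), (2 * (k : ℝ) + 1)

lemma cfF_pos (n : ℕ) : 0 < cfF n := by
  apply Finset.prod_pos
  intro k _
  positivity

lemma cfF_succ (n : ℕ) : cfF (n + 1) = cfF n * (2 * (n : ℝ) + 5) := by
  unfold cfF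
  rw [show n + 1 + 2 = (n + 2) + 1 from rfl, Finset.prod_range_succ]
  push_cast
  ring

lemma cfA_succ (n : ℕ) : cfA (n + 1) = cfA n + (-1 : ℝ) ^ n / (2 * (n : ℝ) + 1) := by
  unfold cfA
  rw [Finset.sum_range_succ]

lemma cfS_succ (n : ℕ) :
    cfS (n + 1) = cfS n + 3 * (-1 : ℝ) ^ n /
      (((n : ℝ) + 1) * ((n : ℝ) + 2) * (2 * (n : ℝ) + 1) * (2 * (n : ℝ) + 3) * (2 * (n : ℝ) + 5)) := by
  have h1 : ((n : ℝ) + 1) ≠ 0 := by positivity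
  have h2 : ((n : ℝ) + 2) ≠ 0 := by positivity
  have h3 : (2 * (n : ℝ) + 1) ≠ 0 := by positivity
  have h4 : (2 * (n : ℝ) + 3) ≠ 0 := by positivity
  have h5 : (2 * (n : ℝ) + 5) ≠ 0 := by positivity
  unfold cfS
  rw [cfA_succ]
  push_cast
  rw [pow_succ]
  field_simp
  ring

/-- The continued fraction with integer part `b₀ = 10`, partial numerators
`aₙ = (2n−1)(2n+3)` and partial denominators `bₙ = 10` converges to `6/(10 − 3π)`:
the convergents `pₙ/qₙ` given by `p₋₁ = 1, q₋₁ = 0, p₀ = 10, q₀ = 1`,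
`pₙ = 10pₙ₋₁ + (2n−1)(2n+3)pₙ₋₂`, `qₙ = 10qₙ₋₁ + (2n−1)(2n+3)qₙ₋₂`
tend to `6/(10 − 3π)`.
(Indices are shifted by one: `p n` here denotes `p_{n-1}`, so the coefficient
`(2(n+1)−1)(2(n+1)+3) = (2n+1)(2n+5)` appears.) -/
theorem cf_ten (p q : ℕ → ℝ)
    (hp0 : p 0 = 1) (hq0 : q 0 = 0) (hp1 : p 1 = 10) (hq1 : q 1 = 1)
    (hp : ∀ n : ℕ,
      p (n + 2) = 10 * p (n + 1) + (2 * (n : ℝ) + 1) * (2 * (n : ℝ) + 5) * p n)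
    (hq : ∀ n : ℕ,
      q (n + 2) = 10 * q (n + 1) + (2 * (n : ℝ) + 1) * (2 * (n : ℝ) + 5) * q n) :
    Tendsto (fun n => p n / q n) atTop (nhds (6 / (10 - 3 * π))) := by
  -- closed form for p
  have hpcf : ∀ n : ℕ, p n = ((n : ℝ) + 1) * cfF n / 3 := by
    have key : ∀ n : ℕ, p n = ((n : ℝ) + 1) * cfF n / 3 ∧
        p (n + 1) = ((n : ℝ) + 2) * cfF (n + 1) / 3 := by
      intro n
      induction n with
      | zero =>
        constructor
        · rw [hp0]; unfold cfF; simp [Finset.prod_range_succ]; norm_num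
        · rw [hp1]; unfold cfF; simp [Finset.prod_range_succ]; norm_num
      | succ m ih =>
        obtain ⟨ih1, ih2⟩ := ih
        have h3 : p (m + 2) = ((m : ℝ) + 3) * cfF (m + 2) / 3 := by
          rw [hp m, ih1, ih2, show m + 2 = (m + 1) + 1 from rfl, cfF_succ (m + 1), cfF_succ m]
          push_cast
          ring
        refine ⟨?_, ?_⟩
        · rw [ih2]; push_cast; ring
        · rw [h3]; push_cast; ring
    intro n; exact (key n).1
  -- q n = p n * cfS n
  have hqcf : ∀ n : ℕ, q n = p n * cfS n := by
    have key : ∀ n : ℕ, q n = p n * cfS n ∧ q (n + 1) = p (n + 1) * cfS (n + 1) := by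
      intro n
      induction n with
      | zero =>
        constructor
        · rw [hq0, hp0]
          unfold cfS cfA
          norm_num
        · rw [hq1, hp1]
          unfold cfS
          rw [cfA_succ]
          unfold cfA
          norm_num
      | succ m ih =>
        obtain ⟨ih1, ih2⟩ := ih
        have h2 : q (m + 2) = p (m + 2) * cfS (m + 2) := by
          have e1 : ((m : ℝ) + 1) ≠ 0 := by positivity
          have e2 : ((m : ℝ) + 2) ≠ 0 := by positivity
          have e25 : ((m : ℝ) + 3) ≠ 0 := by positivity
          have e3 : (2 * (m : ℝ) + 1) ≠ 0 := by positivity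
          have e4 : (2 * (m : ℝ) + 3) ≠ 0 := by positivity
          have e5 : (2 * (m : ℝ) + 5) ≠ 0 := by positivity
          have e6 : (2 * (m : ℝ) + 7) ≠ 0 := by positivity
          rw [hq m, ih1, ih2, hp m, hpcf m, hpcf (m + 1),
            show m + 2 = (m + 1) + 1 from rfl, cfS_succ (m + 1), cfS_succ m,
            cfF_succ m]
          push_cast
          field_simp
          ring
        exact ⟨ih2, h2⟩
    intro n; exact (key n).1
  -- p n ≠ 0
  have hpne : ∀ n : ℕ, p n ≠ 0 := by
    intro n
    rw [hpcf n]
    have := cfF_pos n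
    positivity
  -- p n / q n = (cfS n)⁻¹
  have hratio : ∀ n : ℕ, p n / q n = (cfS n)⁻¹ := by
    intro n
    rw [hqcf n, div_mul_eq_div_div, div_self (hpne n), one_div]
  -- limit of cfS
  have hA : Tendsto cfA atTop (nhds (π / 4)) := Real.tendsto_sum_pi_div_four
  have hn : Tendsto (fun n : ℕ => (n : ℝ)) atTop atTop := tendsto_natCast_atTop_atTop
  have hd1 : Tendsto (fun n : ℕ => 1 / ((n : ℝ) + 1)) atTop (nhds 0) :=
    tendsto_one_div_add_atTop_nhds_zero_nat
  have hg1 : Tendsto (fun n : ℕ => 2 * (2 * (n : ℝ) + 1)) atTop atTop := by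
    apply Tendsto.const_mul_atTop (by norm_num : (0:ℝ) < 2)
    exact tendsto_atTop_add_const_right _ _ (hn.const_mul_atTop (by norm_num))
  have hg2 : Tendsto (fun n : ℕ => 2 * (2 * (n : ℝ) + 3)) atTop atTop := by
    apply Tendsto.const_mul_atTop (by norm_num : (0:ℝ) < 2)
    exact tendsto_atTop_add_const_right _ _ (hn.const_mul_atTop (by norm_num))
  have hd2 : Tendsto (fun n : ℕ => 5 / (2 * (2 * (n : ℝ) + 1))) atTop (nhds 0) :=
    Tendsto.div_atTop tendsto_const_nhds hg1
  have hd3 : Tendsto (fun n : ℕ => 1 / (2 * (2 * (n : ℝ) + 3))) atTop (nhds 0) :=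
    Tendsto.div_atTop tendsto_const_nhds hg2
  have hr : Tendsto (fun n : ℕ =>
      1 / ((n : ℝ) + 1) - 5 / (2 * (2 * (n : ℝ) + 1)) - 1 / (2 * (2 * (n : ℝ) + 3)))
      atTop (nhds 0) := by
    have := (hd1.sub hd2).sub hd3
    simpa using this
  have hsign : Tendsto (fun n : ℕ => (-1 : ℝ) ^ n *
      (1 / ((n : ℝ) + 1) - 5 / (2 * (2 * (n : ℝ) + 1)) - 1 / (2 * (2 * (n : ℝ) + 3))))
      atTop (nhds 0) := by
    apply squeeze_zero_norm (a := fun n : ℕ =>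
      ‖1 / ((n : ℝ) + 1) - 5 / (2 * (2 * (n : ℝ) + 1)) - 1 / (2 * (2 * (n : ℝ) + 3))‖)
    · intro n
      rw [norm_mul, norm_pow, norm_neg, norm_one, one_pow, one_mul]
    · simpa using hr.norm
  have hS : Tendsto cfS atTop (nhds (5 / 3 - 2 * (π / 4) + 0)) := by
    unfold cfS
    exact (tendsto_const_nhds.sub (hA.const_mul 2)).add hsign
  have hval : (5 / 3 - 2 * (π / 4) + 0 : ℝ) = (10 - 3 * π) / 6 := by ring
  rw [hval] at hS
  have hpi : (10 - 3 * π) / 6 ≠ 0 := by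
    have h315 := Real.pi_lt_d2
    have hsub : (0:ℝ) < 10 - 3 * π := by nlinarith
    exact div_ne_zero hsub.ne' (by norm_num)
  have hfin := hS.inv₀ hpi
  rw [inv_div] at hfin
  refine Tendsto.congr ?_ hfin
  intro n
  exact (hratio n).symm
end

section
/- For every integer m ≥ 1, the series y_m = Σ_{n=1}^∞ (-1)^{n-1} / ∏_{j=1}^{m} (2n+2j−3)^2 converges and satisfies the recurrence y_m = (10m^2 + 8m + 1)/(2·((2m+1)!!)^2) − 4m(m+1)^3 · y_{m+2}. -/
open Real

set_option maxHeartbeats 1000000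

/-- The product `∏_{j=0}^{k-1} (2n+2j+1)²`. -/
noncomputable def qsrQ (k n : ℕ) : ℝ :=
  ∏ j ∈ Finset.range k, (2 * (n : ℝ) + 2 * (j : ℝ) + 1) ^ 2

lemma qsrQ_eq_Icc (k n : ℕ) :
    (∏ j ∈ Finset.Icc 1 k, (2 * (n : ℝ) + 2 * (j : ℝ) - 1) ^ 2) = qsrQ k n := by
  induction k with
  | zero => simp [qsrQ]
  | succ K ih =>
      rw [Finset.prod_Icc_succ_top (by omega), ih, qsrQ, qsrQ, Finset.prod_range_succ]
      push_cast
      ring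

lemma qsrQ_pos (k n : ℕ) : 0 < qsrQ k n := by
  apply Finset.prod_pos
  intro j _
  positivity

lemma qsrQ_succ (k n : ℕ) : qsrQ (k + 1) n = qsrQ k n * (2 * (n : ℝ) + 2 * (k : ℝ) + 1) ^ 2 := by
  rw [qsrQ, Finset.prod_range_succ]; rfl

lemma qsrQ_shift (k n : ℕ) :
    qsrQ (k + 1) (n + 1) * (2 * (n : ℝ) + 1) ^ 2 = qsrQ (k + 2) n := by
  have h : qsrQ (k + 1) (n + 1)
      = ∏ j ∈ Finset.range (k + 1), (2 * (n : ℝ) + 2 * ((j : ℝ) + 1) + 1) ^ 2 := by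
    rw [qsrQ]
    exact Finset.prod_congr rfl (fun j _ => by push_cast; ring)
  rw [h, qsrQ, Finset.prod_range_succ' (fun j => (2 * (n : ℝ) + 2 * (j : ℝ) + 1) ^ 2) (k + 1)]
  congr 1
  · exact Finset.prod_congr rfl (fun j _ => by push_cast; ring)
  · norm_num

lemma qsrQ_mono (n : ℕ) : Monotone (fun k => qsrQ k n) := by
  apply monotone_nat_of_le_succ
  intro k
  rw [qsrQ_succ]
  have h0 : (0 : ℝ) ≤ (n : ℝ) := Nat.cast_nonneg n
  have h0' : (0 : ℝ) ≤ (k : ℝ) := Nat.cast_nonneg k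
  have h1 : (1 : ℝ) ≤ (2 * (n : ℝ) + 2 * (k : ℝ) + 1) ^ 2 := by nlinarith
  nlinarith [qsrQ_pos k n]

lemma qsrQ_one (n : ℕ) : qsrQ 1 n = (2 * (n : ℝ) + 1) ^ 2 := by
  rw [qsrQ, Finset.prod_range_one]
  norm_num

lemma qsrQ_two (n : ℕ) : qsrQ 2 n = (2 * (n : ℝ) + 1) ^ 2 * (2 * (n : ℝ) + 3) ^ 2 := by
  rw [qsrQ, Finset.prod_range_succ, Finset.prod_range_one]
  push_cast
  ring

lemma qsrQ_lower (k n : ℕ) (hk : 1 ≤ k) : (2 * (n : ℝ) + 1) ^ 2 ≤ qsrQ k n := by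
  calc (2 * (n : ℝ) + 1) ^ 2 = qsrQ 1 n := (qsrQ_one n).symm
    _ ≤ qsrQ k n := qsrQ_mono n hk

lemma qsrQ_lower2 (k n : ℕ) (hk : 2 ≤ k) :
    (2 * (n : ℝ) + 1) ^ 2 * (2 * (n : ℝ) + 3) ^ 2 ≤ qsrQ k n := by
  calc (2 * (n : ℝ) + 1) ^ 2 * (2 * (n : ℝ) + 3) ^ 2 = qsrQ 2 n := (qsrQ_two n).symm
    _ ≤ qsrQ k n := qsrQ_mono n hk

/-- Base summability: `∑ 1/(n+1)²` converges. -/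
lemma qsr_base_summable : Summable (fun n : ℕ => 1 / ((n : ℝ) + 1) ^ 2) := by
  have h : Summable (fun n : ℕ => 1 / (n : ℝ) ^ 2) :=
    summable_one_div_nat_pow.2 one_lt_two
  have h2 := (summable_nat_add_iff 1).2 h
  apply h2.congr
  intro n
  push_cast
  ring

lemma qsr_summable (k : ℕ) (hk : 1 ≤ k) :
    Summable (fun n : ℕ => (-1 : ℝ) ^ n / qsrQ k n) := by
  rw [← summable_abs_iff]
  apply Summable.of_nonneg_of_le (fun n => abs_nonneg _) _ qsr_base_summable
  intro n
  have hpos := qsrQ_pos k n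
  have hlow := qsrQ_lower k n hk
  rw [abs_div, abs_pow, abs_neg, abs_one, one_pow, abs_of_pos hpos]
  rw [div_le_div_iff₀ hpos (by positivity)]
  have h1 : ((n : ℝ) + 1) ^ 2 ≤ (2 * (n : ℝ) + 1) ^ 2 := by
    nlinarith [Nat.cast_nonneg (α := ℝ) n]
  nlinarith

/-- The telescoping auxiliary sequence. -/
noncomputable def qsrD (m n : ℕ) : ℝ :=
  (2 * (n : ℝ) ^ 2 + (6 * (m : ℝ) + 2) * (n : ℝ)
    + (10 * (m : ℝ) ^ 2 + 8 * (m : ℝ) + 1) / 2) / qsrQ (m + 1) n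

noncomputable def qsrG (m n : ℕ) : ℝ := (-1 : ℝ) ^ n * qsrD m n

lemma qsr_key (m n : ℕ) :
    (-1 : ℝ) ^ n / qsrQ m n
      + 4 * (m : ℝ) * ((m : ℝ) + 1) ^ 3 * ((-1 : ℝ) ^ n / qsrQ (m + 2) n)
      = qsrG m n - qsrG m (n + 1) := by
  have hQm := qsrQ_pos m n
  have h1 : qsrQ (m + 1) n = qsrQ m n * (2 * (n : ℝ) + 2 * (m : ℝ) + 1) ^ 2 := qsrQ_succ m n
  have h2 : qsrQ (m + 2) n
      = qsrQ m n * (2 * (n : ℝ) + 2 * (m : ℝ) + 1) ^ 2 * (2 * (n : ℝ) + 2 * (m : ℝ) + 3) ^ 2 := by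
    rw [show m + 2 = (m + 1) + 1 from rfl, qsrQ_succ (m + 1) n, h1]
    push_cast
    ring
  have hu : (2 * (n : ℝ) + 2 * (m : ℝ) + 1) ≠ 0 := by positivity
  have hv : (2 * (n : ℝ) + 2 * (m : ℝ) + 3) ≠ 0 := by positivity
  have hw : (2 * (n : ℝ) + 1) ≠ 0 := by positivity
  have h3' : qsrQ (m + 1) (n + 1)
      = qsrQ m n * (2 * (n : ℝ) + 2 * (m : ℝ) + 1) ^ 2 * (2 * (n : ℝ) + 2 * (m : ℝ) + 3) ^ 2
        / (2 * (n : ℝ) + 1) ^ 2 := by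
    rw [eq_div_iff (by positivity), qsrQ_shift m n, h2]
  unfold qsrG qsrD
  rw [h1, h2, h3', pow_succ]
  push_cast
  have hne : qsrQ m n ≠ 0 := ne_of_gt hQm
  field_simp
  ring

lemma qsrG_summable (m : ℕ) (hm : 1 ≤ m) : Summable (qsrG m) := by
  rw [← summable_abs_iff]
  set M : ℝ := (m : ℝ) with hM
  have hM0 : (0 : ℝ) ≤ M := Nat.cast_nonneg m
  set c : ℝ := (10 * M ^ 2 + 8 * M + 1) / 2 with hc
  have hc0 : (0 : ℝ) ≤ c := by rw [hc]; nlinarith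
  set C : ℝ := 2 + (6 * M + 2) + c with hC
  have hC0 : (0 : ℝ) ≤ C := by rw [hC]; nlinarith
  apply Summable.of_nonneg_of_le (fun n => abs_nonneg _)
    (f := fun n : ℕ => C * (1 / ((n : ℝ) + 1) ^ 2)) _ (qsr_base_summable.mul_left C)
  intro n
  show |qsrG m n| ≤ C * (1 / ((n : ℝ) + 1) ^ 2)
  set x : ℝ := (n : ℝ) with hx
  have hx0 : (0 : ℝ) ≤ x := Nat.cast_nonneg n
  have hQpos := qsrQ_pos (m + 1) n
  have hQlow := qsrQ_lower2 (m + 1) n (by omega)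
  have hnum : (0 : ℝ) ≤ 2 * x ^ 2 + (6 * M + 2) * x + c := by nlinarith
  have habs : |qsrG m n| = (2 * x ^ 2 + (6 * M + 2) * x + c) / qsrQ (m + 1) n := by
    rw [qsrG, qsrD, abs_mul, abs_pow, abs_neg, abs_one, one_pow, one_mul, abs_div,
      abs_of_nonneg hnum, abs_of_pos hQpos]
  rw [habs, mul_one_div, div_le_div_iff₀ hQpos (by positivity)]
  have h1 : (x + 1) ^ 2 ≤ (2 * x + 1) ^ 2 := by nlinarith
  have h2 : 2 * x ^ 2 + (6 * M + 2) * x + c ≤ C * (2 * x + 3) ^ 2 := by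
    have e1 : x ^ 2 ≤ (2 * x + 3) ^ 2 := by nlinarith
    have e2 : x ≤ (2 * x + 3) ^ 2 := by nlinarith
    have e3 : (1 : ℝ) ≤ (2 * x + 3) ^ 2 := by nlinarith
    rw [hC]
    nlinarith
  calc (2 * x ^ 2 + (6 * M + 2) * x + c) * (x + 1) ^ 2
      ≤ (C * (2 * x + 3) ^ 2) * (2 * x + 1) ^ 2 := by
        apply mul_le_mul h2 h1 (by positivity) (by positivity)
    _ = C * ((2 * x + 1) ^ 2 * (2 * x + 3) ^ 2) := by ring
    _ ≤ C * qsrQ (m + 1) n := by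
        apply mul_le_mul_of_nonneg_left hQlow hC0

lemma qsrG_zero (m : ℕ) : qsrG m 0 =
    (10 * (m : ℝ) ^ 2 + 8 * (m : ℝ) + 1) /
      (2 * (∏ j ∈ Finset.range (m + 1), (2 * (j : ℝ) + 1)) ^ 2) := by
  rw [qsrG, qsrD]
  have hQ0 : qsrQ (m + 1) 0 = (∏ j ∈ Finset.range (m + 1), (2 * (j : ℝ) + 1)) ^ 2 := by
    rw [qsrQ, ← Finset.prod_pow]
    exact Finset.prod_congr rfl (fun j _ => by norm_num)
  rw [hQ0]
  have hP : (0 : ℝ) < ∏ j ∈ Finset.range (m + 1), (2 * (j : ℝ) + 1) :=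
    Finset.prod_pos (fun j _ => by positivity)
  rw [Nat.cast_zero, pow_zero, one_mul]
  rw [div_eq_div_iff (by positivity) (by positivity)]
  ring

/-- For every integer `m ≥ 1`, the series
`y_m = Σ_{n=1}^∞ (-1)^{n-1} / ∏_{j=1}^{m} (2n+2j-3)²` converges and satisfies the recurrence
`y_m = (10m² + 8m + 1)/(2·((2m+1)!!)²) − 4m(m+1)³·y_{m+2}`.
Here `(2m+1)!! = ∏_{j=0}^{m} (2j+1)` and the summation index is shifted: `n : ℕ`
corresponds to `n + 1` in the statement (so `2n+2j-3` becomes `2n+2j-1`). -/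
theorem quadratic_series_recurrence (m : ℕ) (hm : 1 ≤ m) :
    Summable (fun n : ℕ =>
      (-1 : ℝ) ^ n / ∏ j ∈ Finset.Icc 1 m, (2 * (n : ℝ) + 2 * (j : ℝ) - 1) ^ 2) ∧
    ∑' n : ℕ, (-1 : ℝ) ^ n / ∏ j ∈ Finset.Icc 1 m, (2 * (n : ℝ) + 2 * (j : ℝ) - 1) ^ 2 =
      (10 * (m : ℝ) ^ 2 + 8 * (m : ℝ) + 1) /
          (2 * (∏ j ∈ Finset.range (m + 1), (2 * (j : ℝ) + 1)) ^ 2) -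
        4 * (m : ℝ) * ((m : ℝ) + 1) ^ 3 *
          ∑' n : ℕ, (-1 : ℝ) ^ n /
            ∏ j ∈ Finset.Icc 1 (m + 2), (2 * (n : ℝ) + 2 * (j : ℝ) - 1) ^ 2 := by
  simp only [qsrQ_eq_Icc]
  have ha := qsr_summable m hm
  have hb := qsr_summable (m + 2) (by omega)
  refine ⟨ha, ?_⟩
  have hgs := qsrG_summable m hm
  have hgs1 : Summable (fun n => qsrG m (n + 1)) := (summable_nat_add_iff 1).2 hgs
  have htel : ∑' n : ℕ, (qsrG m n - qsrG m (n + 1)) = qsrG m 0 := by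
    rw [Summable.tsum_sub hgs hgs1, Summable.tsum_eq_zero_add hgs]
    ring
  have hsum : (∑' n : ℕ, (-1 : ℝ) ^ n / qsrQ m n)
      + 4 * (m : ℝ) * ((m : ℝ) + 1) ^ 3 * ∑' n : ℕ, (-1 : ℝ) ^ n / qsrQ (m + 2) n
      = qsrG m 0 := by
    rw [← tsum_mul_left, ← Summable.tsum_add ha (hb.mul_left _), ← htel]
    exact tsum_congr (qsr_key m)
  rw [qsrG_zero m] at hsum
  linarith
end

section
/- Σ_{n=1}^∞ (-1)^{n-1} / ((2n−1)^2(2n+1)^2) = 1/2 − π/8. -/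
open Real Filter Finset Topology

private noncomputable def gP (k : ℕ) : ℝ := ∑ i ∈ Finset.range k, (-1 : ℝ) ^ i / (2 * i + 1)

private lemma partial_eq (k : ℕ) :
    ∑ n ∈ Finset.range k, (-1 : ℝ) ^ n / ((2 * (n : ℝ) + 1) ^ 2 * (2 * (n : ℝ) + 3) ^ 2)
      = 1 / 4 * (1 - (-1 : ℝ) ^ k / (2 * (k : ℝ) + 1) ^ 2)
        - 1 / 4 * (gP k + gP (k + 1) - 1) := by
  induction k with
  | zero => simp [gP]
  | succ k ih =>
    rw [Finset.sum_range_succ, ih]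
    have e1 : gP (k + 1) = gP k + (-1 : ℝ) ^ k / (2 * k + 1) := by
      simp [gP, Finset.sum_range_succ]
    have e2 : gP (k + 2) = gP (k + 1) + (-1 : ℝ) ^ (k + 1) / (2 * (k + 1) + 1) := by
      simp [gP, Finset.sum_range_succ]
    rw [e2, e1]
    have h1 : (2 * (k : ℝ) + 1) ≠ 0 := by positivity
    have h3 : (2 * ((k : ℝ) + 1) + 1) ≠ 0 := by positivity
    have h2 : (2 * (k : ℝ) + 3) ≠ 0 := by positivity
    push_cast
    field_simp
    ring

/-- Σ_{n=1}^∞ (-1)^{n-1} / ((2n−1)²(2n+1)²) = 1/2 − π/8.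
(The summation index is shifted: `n : ℕ` here corresponds to `n + 1` in the statement.) -/
theorem sum_alt_two_odd_squares :
    ∑' n : ℕ, (-1 : ℝ) ^ n / ((2 * (n : ℝ) + 1) ^ 2 * (2 * (n : ℝ) + 3) ^ 2) =
      1 / 2 - π / 8 := by
  set f : ℕ → ℝ := fun n => (-1 : ℝ) ^ n / ((2 * (n : ℝ) + 1) ^ 2 * (2 * (n : ℝ) + 3) ^ 2) with hf
  have hb : Summable (fun n : ℕ => 1 / ((n : ℝ) + 1) ^ 2) := by
    have := (summable_nat_add_iff (f := fun n : ℕ => 1 / (n : ℝ) ^ 2) 1).mpr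
      ((Real.summable_one_div_nat_rpow.mpr one_lt_two).congr (by
        intro n; rw [← Real.rpow_natCast (n : ℝ) 2]; norm_num))
    exact this.congr (by intro n; push_cast; ring_nf)
  have hsumm : Summable f := by
    apply Summable.of_abs
    apply hb.of_nonneg_of_le (fun n => abs_nonneg _)
    intro n
    have hpos : (0:ℝ) < (2 * (n : ℝ) + 1) ^ 2 * (2 * (n : ℝ) + 3) ^ 2 := by positivity
    rw [hf, abs_div, abs_pow, abs_neg, abs_one, one_pow, abs_of_pos hpos]
    apply one_div_le_one_div_of_le (by positivity)
    nlinarith [Nat.cast_nonneg (α := ℝ) n]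
  have hP : Tendsto gP atTop (𝓝 (π / 4)) := Real.tendsto_sum_pi_div_four
  have hP' : Tendsto (fun k => gP (k + 1)) atTop (𝓝 (π / 4)) :=
    hP.comp (tendsto_add_atTop_nat 1)
  have hf0 : Tendsto (fun k : ℕ => (-1 : ℝ) ^ k / (2 * (k : ℝ) + 1) ^ 2) atTop (𝓝 0) := by
    apply squeeze_zero_norm (a := fun k : ℕ => 1 / ((k : ℝ) + 1))
    · intro k
      have hpos : (0:ℝ) < (2 * (k : ℝ) + 1) ^ 2 := by positivity
      rw [norm_div, norm_pow, norm_neg, norm_one, one_pow, Real.norm_eq_abs,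
        abs_of_pos hpos]
      rw [div_le_div_iff₀ hpos (by positivity)]
      nlinarith [Nat.cast_nonneg (α := ℝ) k]
    · exact tendsto_one_div_add_atTop_nhds_zero_nat
  have hlim : Tendsto (fun k => ∑ n ∈ Finset.range k, f n) atTop (𝓝 (1 / 2 - π / 8)) := by
    have : Tendsto (fun k : ℕ => 1 / 4 * (1 - (-1 : ℝ) ^ k / (2 * (k : ℝ) + 1) ^ 2)
        - 1 / 4 * (gP k + gP (k + 1) - 1)) atTop
        (𝓝 (1 / 4 * (1 - 0) - 1 / 4 * (π / 4 + π / 4 - 1))) := by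
      exact (((tendsto_const_nhds.sub hf0).const_mul _).sub
        (((hP.add hP').sub tendsto_const_nhds).const_mul _))
    have heq : (fun k => ∑ n ∈ Finset.range k, f n) = fun k : ℕ => 1 / 4 * (1 - (-1 : ℝ) ^ k / (2 * (k : ℝ) + 1) ^ 2)
        - 1 / 4 * (gP k + gP (k + 1) - 1) := funext partial_eq
    rw [heq]
    convert this using 2
    ring
  exact tendsto_nhds_unique (hsumm.hasSum.tendsto_sum_nat) hlim
end

section
/- Σ_{n=1}^∞ (-1)^{n-1} / ((2n−1)^2(2n+1)^2(2n+3)^2(2n+5)^2) = (2!)^3/((4!)^3·1!) · π − 7/4050, i.e. equals π/1728 − 7/4050. -/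
/-!
Partial fractions split the summand into `1 / (432 (2n+1))` plus a remainder of the form
`R(n) + R(n+1)`, where `R = correction` is rational and vanishes at infinity. With the sign
`(-1)^n` the remainder telescopes to `R(0) = -7/4050`, and the main part gives Leibniz's
series `(1/432) · π/4 = π/1728`.
-/

open Real Filter Finset Topology

lemma tendsto_sum_range_add_sub_succ {E : Type*} [AddCommGroup E] [TopologicalSpace E]
    [IsTopologicalAddGroup E] {a G : ℕ → E} {A : E}
    (ha : Tendsto (fun N ↦ ∑ i ∈ range N, a i) atTop (𝓝 A)) (hG : Tendsto G atTop (𝓝 0)) :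
    Tendsto (fun N ↦ ∑ i ∈ range N, (a i + (G i - G (i + 1)))) atTop (𝓝 (A + G 0)) := by
  simp only [sum_add_distrib, sum_range_sub']
  simpa using ha.add (tendsto_const_nhds.sub hG)

noncomputable def correction (x : ℝ) : ℝ :=
  -43 / 13824 / (2 * x + 1) + 1 / 2304 / (2 * x + 1) ^ 2 + 1 / 864 / (2 * x + 3) +
    1 / 288 / (2 * x + 3) ^ 2 + 11 / 13824 / (2 * x + 5) + 1 / 2304 / (2 * x + 5) ^ 2

lemma one_div_prod_odd_sq_eq {x : ℝ} (hx : 0 ≤ x) :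
    1 / ((2 * x + 1) ^ 2 * (2 * x + 3) ^ 2 * (2 * x + 5) ^ 2 * (2 * x + 7) ^ 2) =
      1 / 432 / (2 * x + 1) + (correction x + correction (x + 1)) := by
  unfold correction
  field_simp
  ring

lemma tendsto_two_mul_add_atTop (k : ℝ) : Tendsto (fun x : ℝ ↦ 2 * x + k) atTop atTop :=
  tendsto_atTop_add_const_right _ k (tendsto_id.const_mul_atTop two_pos)

lemma tendsto_correction_atTop : Tendsto correction atTop (𝓝 0) := by
  have hlin k c := tendsto_const_nhds (x := c).div_atTop (tendsto_two_mul_add_atTop k)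
  have hsq k c := tendsto_const_nhds (x := c).div_atTop
    ((tendsto_pow_atTop two_ne_zero).comp (tendsto_two_mul_add_atTop k))
  have hlim := (((((hlin 1 (-43 / 13824)).add (hsq 1 (1 / 2304))).add (hlin 3 (1 / 864))).add
    (hsq 3 (1 / 288))).add (hlin 5 (11 / 13824))).add (hsq 5 (1 / 2304))
  simp only [add_zero] at hlim
  exact hlim

lemma sq_add_one_le_prod_odd_sq {x : ℝ} (hx : 0 ≤ x) :
    (x + 1) ^ 2 ≤ (2 * x + 1) ^ 2 * (2 * x + 3) ^ 2 * (2 * x + 5) ^ 2 * (2 * x + 7) ^ 2 := by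
  have hrest : 1 ≤ ((2 * x + 3) * (2 * x + 5) * (2 * x + 7)) ^ 2 :=
    one_le_pow₀ (one_le_mul_of_one_le_of_one_le
      (one_le_mul_of_one_le_of_one_le (by linarith) (by linarith)) (by linarith))
  calc (x + 1) ^ 2 ≤ (2 * x + 1) ^ 2 * 1 := by nlinarith
    _ ≤ (2 * x + 1) ^ 2 * ((2 * x + 3) * (2 * x + 5) * (2 * x + 7)) ^ 2 := by gcongr
    _ = _ := by ring

lemma summable_alt_div_prod_odd_sq :
    Summable fun n : ℕ ↦ (-1 : ℝ) ^ n /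
      ((2 * (n : ℝ) + 1) ^ 2 * (2 * (n : ℝ) + 3) ^ 2 * (2 * (n : ℝ) + 5) ^ 2 *
        (2 * (n : ℝ) + 7) ^ 2) := by
  have hp : Summable fun n : ℕ ↦ 1 / ((n : ℝ) + 1) ^ 2 := by
    simpa using (summable_nat_add_iff 1).mpr (summable_one_div_nat_pow.mpr one_lt_two)
  refine hp.of_norm_bounded fun n ↦ ?_
  rw [norm_div, norm_pow, norm_neg, norm_one, one_pow, Real.norm_of_nonneg (by positivity)]
  exact one_div_le_one_div_of_le (by positivity) (sq_add_one_le_prod_odd_sq n.cast_nonneg)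

/-- Σ_{n=1}^∞ (-1)^{n-1} / ((2n−1)²(2n+1)²(2n+3)²(2n+5)²)
      = (2!)³/((4!)³·1!)·π − 7/4050  ( = π/1728 − 7/4050 ).
(The summation index is shifted: `n : ℕ` here corresponds to `n + 1` in the statement.) -/
theorem sum_alt_four_odd_squares :
    ∑' n : ℕ, (-1 : ℝ) ^ n /
        ((2 * (n : ℝ) + 1) ^ 2 * (2 * (n : ℝ) + 3) ^ 2 * (2 * (n : ℝ) + 5) ^ 2 *
          (2 * (n : ℝ) + 7) ^ 2) =
      ((Nat.factorial 2 : ℝ) ^ 3 / ((Nat.factorial 4 : ℝ) ^ 3 * (Nat.factorial 1 : ℝ))) * π -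
        7 / 4050 := by
  set G : ℕ → ℝ := fun n ↦ (-1) ^ n * correction n
  have hterm (n : ℕ) : (-1 : ℝ) ^ n /
      ((2 * (n : ℝ) + 1) ^ 2 * (2 * (n : ℝ) + 3) ^ 2 * (2 * (n : ℝ) + 5) ^ 2 *
        (2 * (n : ℝ) + 7) ^ 2) = (-1) ^ n / (2 * n + 1) / 432 + (G n - G (n + 1)) := by
    rw [div_eq_mul_one_div, one_div_prod_odd_sq_eq n.cast_nonneg]
    simp only [G, pow_succ, Nat.cast_succ]
    ring
  have hG : Tendsto G atTop (𝓝 0) := by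
    refine squeeze_zero_norm (fun n ↦ ?_) (by simpa using (tendsto_correction_atTop.comp
      tendsto_natCast_atTop_atTop).norm)
    simp [G]
  have hleibniz := tendsto_sum_pi_div_four.div_const 432
  simp only [sum_div] at hleibniz
  have hlim := tendsto_sum_range_add_sub_succ hleibniz hG
  simp only [← hterm] at hlim
  rw [tendsto_nhds_unique summable_alt_div_prod_odd_sq.hasSum.tendsto_sum_nat hlim]
  norm_num [G, correction, Nat.factorial]
  ring
end

section
/- Σ_{n=1}^∞ (-1)^{n-1} / ((2n−1)^2(2n+1)^2(2n+3)^2(2n+5)^2(2n+7)^2(2n+9)^2) = −(3!)^3/((6!)^3·2!) · π + 41/44651250. -/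
open Real Filter Topology

private lemma alt_shift {h g : ℕ → ℝ} {L : ℝ} (j : ℕ)
    (hg : ∀ n, g n = (-1 : ℝ) ^ j * h (n + j))
    (hl : Tendsto (fun N => ∑ n ∈ Finset.range N, h n) atTop (𝓝 L)) :
    Tendsto (fun N => ∑ n ∈ Finset.range N, g n) atTop
      (𝓝 ((-1 : ℝ) ^ j * (L - ∑ n ∈ Finset.range j, h n))) := by
  have key : ∀ N, ∑ n ∈ Finset.range N, g n
      = (-1 : ℝ) ^ j * ((∑ n ∈ Finset.range (N + j), h n) - ∑ n ∈ Finset.range j, h n) := by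
    intro N
    calc ∑ n ∈ Finset.range N, g n
        = (-1 : ℝ) ^ j * ∑ n ∈ Finset.range N, h (j + n) := by
          rw [Finset.mul_sum]
          exact Finset.sum_congr rfl fun n _ => by rw [hg, add_comm n j]
      _ = _ := by rw [add_comm N j, Finset.sum_range_add]; ring
  simp only [key]
  exact ((hl.comp (tendsto_add_atTop_nat j)).sub tendsto_const_nhds).const_mul _

set_option maxHeartbeats 2000000 in
/-- Σ_{n=1}^∞ (-1)^{n-1} / ((2n−1)²(2n+1)²(2n+3)²(2n+5)²(2n+7)²(2n+9)²)
      = −(3!)³/((6!)³·2!)·π + 41/44651250.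
(The summation index is shifted: `n : ℕ` here corresponds to `n + 1` in the statement.) -/
theorem sum_alt_six_odd_squares :
    ∑' n : ℕ, (-1 : ℝ) ^ n /
        ((2 * (n : ℝ) + 1) ^ 2 * (2 * (n : ℝ) + 3) ^ 2 * (2 * (n : ℝ) + 5) ^ 2 *
          (2 * (n : ℝ) + 7) ^ 2 * (2 * (n : ℝ) + 9) ^ 2 * (2 * (n : ℝ) + 11) ^ 2) =
      -((Nat.factorial 3 : ℝ) ^ 3 / ((Nat.factorial 6 : ℝ) ^ 3 * (Nat.factorial 2 : ℝ))) * π +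
        41 / 44651250 := by
  set f : ℕ → ℝ := fun n => (-1 : ℝ) ^ n /
        ((2 * (n : ℝ) + 1) ^ 2 * (2 * (n : ℝ) + 3) ^ 2 * (2 * (n : ℝ) + 5) ^ 2 *
          (2 * (n : ℝ) + 7) ^ 2 * (2 * (n : ℝ) + 9) ^ 2 * (2 * (n : ℝ) + 11) ^ 2) with hfdef
  -- the comparison series
  have hbig : Summable (fun n : ℕ => 1 / ((n : ℝ) + 1) ^ 2) := by
    have h0 : Summable (fun n : ℕ => 1 / (n : ℝ) ^ 2) :=
      Real.summable_one_div_nat_pow.mpr one_lt_two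
    exact ((summable_nat_add_iff 1).mpr h0).congr fun n => by push_cast; ring
  -- `f` is summable
  have hF : Summable f := by
    apply Summable.of_abs
    apply Summable.of_nonneg_of_le (fun n => abs_nonneg _) _ hbig
    intro n
    have hn : (0 : ℝ) ≤ (n : ℝ) := Nat.cast_nonneg n
    have hp : (0 : ℝ) < (2 * (n : ℝ) + 1) ^ 2 * (2 * (n : ℝ) + 3) ^ 2 * (2 * (n : ℝ) + 5) ^ 2 *
        (2 * (n : ℝ) + 7) ^ 2 * (2 * (n : ℝ) + 9) ^ 2 * (2 * (n : ℝ) + 11) ^ 2 := by positivity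
    have habs : |f n| = 1 / ((2 * (n : ℝ) + 1) ^ 2 * (2 * (n : ℝ) + 3) ^ 2 * (2 * (n : ℝ) + 5) ^ 2 *
        (2 * (n : ℝ) + 7) ^ 2 * (2 * (n : ℝ) + 9) ^ 2 * (2 * (n : ℝ) + 11) ^ 2) := by
      rw [hfdef]
      rw [abs_div, abs_pow, abs_neg, abs_one, one_pow, abs_of_pos hp]
    rw [habs]
    apply one_div_le_one_div_of_le (by positivity)
    calc ((n : ℝ) + 1) ^ 2 = ((n : ℝ) + 1) ^ 2 * 1 * 1 * 1 * 1 * 1 := by ring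
      _ ≤ _ := by gcongr <;> nlinarith [hn]
  -- the alternating squares series
  have hs2 : Summable (fun n : ℕ => (-1 : ℝ) ^ n / (2 * (n : ℝ) + 1) ^ 2) := by
    apply Summable.of_abs
    apply Summable.of_nonneg_of_le (fun n => abs_nonneg _) _ hbig
    intro n
    have hn : (0 : ℝ) ≤ (n : ℝ) := Nat.cast_nonneg n
    have hp : (0 : ℝ) < (2 * (n : ℝ) + 1) ^ 2 := by positivity
    rw [abs_div, abs_pow, abs_pow, abs_neg, abs_one, one_pow, abs_of_nonneg (by linarith)]
    apply one_div_le_one_div_of_le (by positivity)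
    nlinarith [hn]
  -- limits of partial sums of each elementary series
  have Ta0 : Tendsto (fun N => ∑ n ∈ Finset.range N, (-1 : ℝ) ^ n / (2 * (n : ℝ) + 1))
      atTop (𝓝 (π / 4)) := Real.tendsto_sum_pi_div_four
  have Tb0 : Tendsto (fun N => ∑ n ∈ Finset.range N, (-1 : ℝ) ^ n / (2 * (n : ℝ) + 1) ^ 2)
      atTop (𝓝 (∑' n : ℕ, (-1 : ℝ) ^ n / (2 * (n : ℝ) + 1) ^ 2)) :=
    hs2.hasSum.tendsto_sum_nat
  have Ta1 := alt_shift 1 (g := fun n : ℕ => (-1 : ℝ) ^ n / (2 * (n : ℝ) + 3))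
    (fun n => by push_cast; ring) Ta0
  have Ta2 := alt_shift 2 (g := fun n : ℕ => (-1 : ℝ) ^ n / (2 * (n : ℝ) + 5))
    (fun n => by push_cast; ring) Ta0
  have Ta3 := alt_shift 3 (g := fun n : ℕ => (-1 : ℝ) ^ n / (2 * (n : ℝ) + 7))
    (fun n => by push_cast; ring) Ta0
  have Ta4 := alt_shift 4 (g := fun n : ℕ => (-1 : ℝ) ^ n / (2 * (n : ℝ) + 9))
    (fun n => by push_cast; ring) Ta0
  have Ta5 := alt_shift 5 (g := fun n : ℕ => (-1 : ℝ) ^ n / (2 * (n : ℝ) + 11))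
    (fun n => by push_cast; ring) Ta0
  have Tb1 := alt_shift 1 (g := fun n : ℕ => (-1 : ℝ) ^ n / (2 * (n : ℝ) + 3) ^ 2)
    (fun n => by push_cast; ring) Tb0
  have Tb2 := alt_shift 2 (g := fun n : ℕ => (-1 : ℝ) ^ n / (2 * (n : ℝ) + 5) ^ 2)
    (fun n => by push_cast; ring) Tb0
  have Tb3 := alt_shift 3 (g := fun n : ℕ => (-1 : ℝ) ^ n / (2 * (n : ℝ) + 7) ^ 2)
    (fun n => by push_cast; ring) Tb0
  have Tb4 := alt_shift 4 (g := fun n : ℕ => (-1 : ℝ) ^ n / (2 * (n : ℝ) + 9) ^ 2)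
    (fun n => by push_cast; ring) Tb0
  have Tb5 := alt_shift 5 (g := fun n : ℕ => (-1 : ℝ) ^ n / (2 * (n : ℝ) + 11) ^ 2)
    (fun n => by push_cast; ring) Tb0
  -- pointwise partial fraction decomposition
  have hpt : ∀ n : ℕ, f n =
      (-137 / 884736000) * ((-1 : ℝ) ^ n / (2 * (n : ℝ) + 1)) +
      (1 / 14745600) * ((-1 : ℝ) ^ n / (2 * (n : ℝ) + 1) ^ 2) +
      (-13 / 7077888) * ((-1 : ℝ) ^ n / (2 * (n : ℝ) + 3)) +
      (1 / 589824) * ((-1 : ℝ) ^ n / (2 * (n : ℝ) + 3) ^ 2) +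
      (-1 / 442368) * ((-1 : ℝ) ^ n / (2 * (n : ℝ) + 5)) +
      (1 / 147456) * ((-1 : ℝ) ^ n / (2 * (n : ℝ) + 5) ^ 2) +
      (1 / 442368) * ((-1 : ℝ) ^ n / (2 * (n : ℝ) + 7)) +
      (1 / 147456) * ((-1 : ℝ) ^ n / (2 * (n : ℝ) + 7) ^ 2) +
      (13 / 7077888) * ((-1 : ℝ) ^ n / (2 * (n : ℝ) + 9)) +
      (1 / 589824) * ((-1 : ℝ) ^ n / (2 * (n : ℝ) + 9) ^ 2) +
      (137 / 884736000) * ((-1 : ℝ) ^ n / (2 * (n : ℝ) + 11)) +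
      (1 / 14745600) * ((-1 : ℝ) ^ n / (2 * (n : ℝ) + 11) ^ 2) := by
    intro n
    have hn : (0 : ℝ) ≤ (n : ℝ) := Nat.cast_nonneg n
    have h1 : (2 * (n : ℝ) + 1) ≠ 0 := by positivity
    have h3 : (2 * (n : ℝ) + 3) ≠ 0 := by positivity
    have h5 : (2 * (n : ℝ) + 5) ≠ 0 := by positivity
    have h7 : (2 * (n : ℝ) + 7) ≠ 0 := by positivity
    have h9 : (2 * (n : ℝ) + 9) ≠ 0 := by positivity
    have h11 : (2 * (n : ℝ) + 11) ≠ 0 := by positivity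
    rw [hfdef]
    field_simp
    ring
  -- rewrite partial sums of `f`
  have hrw : (fun N => ∑ n ∈ Finset.range N, f n) = fun N =>
      (-137 / 884736000) * (∑ n ∈ Finset.range N, (-1 : ℝ) ^ n / (2 * (n : ℝ) + 1)) +
      (1 / 14745600) * (∑ n ∈ Finset.range N, (-1 : ℝ) ^ n / (2 * (n : ℝ) + 1) ^ 2) +
      (-13 / 7077888) * (∑ n ∈ Finset.range N, (-1 : ℝ) ^ n / (2 * (n : ℝ) + 3)) +
      (1 / 589824) * (∑ n ∈ Finset.range N, (-1 : ℝ) ^ n / (2 * (n : ℝ) + 3) ^ 2) +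
      (-1 / 442368) * (∑ n ∈ Finset.range N, (-1 : ℝ) ^ n / (2 * (n : ℝ) + 5)) +
      (1 / 147456) * (∑ n ∈ Finset.range N, (-1 : ℝ) ^ n / (2 * (n : ℝ) + 5) ^ 2) +
      (1 / 442368) * (∑ n ∈ Finset.range N, (-1 : ℝ) ^ n / (2 * (n : ℝ) + 7)) +
      (1 / 147456) * (∑ n ∈ Finset.range N, (-1 : ℝ) ^ n / (2 * (n : ℝ) + 7) ^ 2) +
      (13 / 7077888) * (∑ n ∈ Finset.range N, (-1 : ℝ) ^ n / (2 * (n : ℝ) + 9)) +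
      (1 / 589824) * (∑ n ∈ Finset.range N, (-1 : ℝ) ^ n / (2 * (n : ℝ) + 9) ^ 2) +
      (137 / 884736000) * (∑ n ∈ Finset.range N, (-1 : ℝ) ^ n / (2 * (n : ℝ) + 11)) +
      (1 / 14745600) * (∑ n ∈ Finset.range N, (-1 : ℝ) ^ n / (2 * (n : ℝ) + 11) ^ 2) := by
    funext N
    simp only [Finset.mul_sum, ← Finset.sum_add_distrib]
    exact Finset.sum_congr rfl fun n _ => hpt n
  have Tcombo : Tendsto (fun N => ∑ n ∈ Finset.range N, f n) atTop (𝓝 (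
      (-137 / 884736000) * (π / 4) +
      (1 / 14745600) * (∑' n : ℕ, (-1 : ℝ) ^ n / (2 * (n : ℝ) + 1) ^ 2) +
      (-13 / 7077888) * ((-1 : ℝ) ^ 1 * (π / 4 - ∑ n ∈ Finset.range 1, (-1 : ℝ) ^ n / (2 * (n : ℝ) + 1))) +
      (1 / 589824) * ((-1 : ℝ) ^ 1 * ((∑' n : ℕ, (-1 : ℝ) ^ n / (2 * (n : ℝ) + 1) ^ 2) - ∑ n ∈ Finset.range 1, (-1 : ℝ) ^ n / (2 * (n : ℝ) + 1) ^ 2)) +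
      (-1 / 442368) * ((-1 : ℝ) ^ 2 * (π / 4 - ∑ n ∈ Finset.range 2, (-1 : ℝ) ^ n / (2 * (n : ℝ) + 1))) +
      (1 / 147456) * ((-1 : ℝ) ^ 2 * ((∑' n : ℕ, (-1 : ℝ) ^ n / (2 * (n : ℝ) + 1) ^ 2) - ∑ n ∈ Finset.range 2, (-1 : ℝ) ^ n / (2 * (n : ℝ) + 1) ^ 2)) +
      (1 / 442368) * ((-1 : ℝ) ^ 3 * (π / 4 - ∑ n ∈ Finset.range 3, (-1 : ℝ) ^ n / (2 * (n : ℝ) + 1))) +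
      (1 / 147456) * ((-1 : ℝ) ^ 3 * ((∑' n : ℕ, (-1 : ℝ) ^ n / (2 * (n : ℝ) + 1) ^ 2) - ∑ n ∈ Finset.range 3, (-1 : ℝ) ^ n / (2 * (n : ℝ) + 1) ^ 2)) +
      (13 / 7077888) * ((-1 : ℝ) ^ 4 * (π / 4 - ∑ n ∈ Finset.range 4, (-1 : ℝ) ^ n / (2 * (n : ℝ) + 1))) +
      (1 / 589824) * ((-1 : ℝ) ^ 4 * ((∑' n : ℕ, (-1 : ℝ) ^ n / (2 * (n : ℝ) + 1) ^ 2) - ∑ n ∈ Finset.range 4, (-1 : ℝ) ^ n / (2 * (n : ℝ) + 1) ^ 2)) +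
      (137 / 884736000) * ((-1 : ℝ) ^ 5 * (π / 4 - ∑ n ∈ Finset.range 5, (-1 : ℝ) ^ n / (2 * (n : ℝ) + 1))) +
      (1 / 14745600) * ((-1 : ℝ) ^ 5 * ((∑' n : ℕ, (-1 : ℝ) ^ n / (2 * (n : ℝ) + 1) ^ 2) - ∑ n ∈ Finset.range 5, (-1 : ℝ) ^ n / (2 * (n : ℝ) + 1) ^ 2)))) := by
    rw [hrw]
    exact (((((((((((Ta0.const_mul _).add (Tb0.const_mul _)).add (Ta1.const_mul _)).add
      (Tb1.const_mul _)).add (Ta2.const_mul _)).add (Tb2.const_mul _)).add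
      (Ta3.const_mul _)).add (Tb3.const_mul _)).add (Ta4.const_mul _)).add
      (Tb4.const_mul _)).add (Ta5.const_mul _)).add (Tb5.const_mul _)
  have key := tendsto_nhds_unique hF.hasSum.tendsto_sum_nat Tcombo
  rw [key]
  simp only [Finset.sum_range_succ, Finset.sum_range_zero]
  push_cast
  norm_num [Nat.factorial]
  ring
end

section
/- Σ_{n=1}^∞ (-1)^{n-1} / ((2n−1)^2(2n+1)^2(2n+3)^2) = −G/32 + 19/576, where G is Catalan's constant. -/
/-!
Partial fractions give, for `x = 2n + 1`,
`1/(x²(x+2)²(x+4)²) = 1/(64x²) + 1/(16(x+2)²) + 1/(64(x+4)²) - (3/128)(1/x - 1/(x+4))`.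
Against the weight `(-1)ⁿ`, the three square terms are the Catalan series and its shifts by one
and two places, with sums `G`, `1 - G` and `G - 8/9`. The simple-pole terms telescope in steps
of two to `1 + (-1/3) = 2/3`; since `∑ (-1)ⁿ/(2n+1)` only converges conditionally, this is done
through partial sums rather than by splitting the series.
-/

open Filter Topology Finset

section Telescoping

variable {E : Type*} [AddCommGroup E] [TopologicalSpace E] [IsTopologicalAddGroup E] [T2Space E]

theorem hasSum_sub_succ_of_tendsto_zero {f : ℕ → E} (hf : Tendsto f atTop (𝓝 0))
    (hs : Summable fun n => f n - f (n + 1)) : HasSum (fun n => f n - f (n + 1)) (f 0) := by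
  have hpartial : Tendsto (fun N => ∑ n ∈ range N, (f n - f (n + 1))) atTop (𝓝 (f 0)) := by
    simp_rw [sum_range_sub']
    simpa using tendsto_const_nhds.sub hf
  rw [← tendsto_nhds_unique hs.hasSum.tendsto_sum_nat hpartial]
  exact hs.hasSum

theorem hasSum_sub_add_two_of_tendsto_zero {f : ℕ → E} (hf : Tendsto f atTop (𝓝 0))
    (hs : Summable fun n => f n - f (n + 2)) : HasSum (fun n => f n - f (n + 2)) (f 0 + f 1) := by
  have hg : Tendsto (fun n => f n + f (n + 1)) atTop (𝓝 0) := by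
    simpa using hf.add (hf.comp (tendsto_add_atTop_nat 1))
  have key : ∀ n, f n - f (n + 2) = f n + f (n + 1) - (f (n + 1) + f (n + 1 + 1)) := fun n => by
    abel
  simp_rw [key] at hs ⊢
  exact hasSum_sub_succ_of_tendsto_zero hg hs

end Telescoping

theorem HasSum.neg_one_pow_mul_succ {g : ℕ → ℝ} {s : ℝ}
    (h : HasSum (fun n => (-1) ^ n * g n) s) :
    HasSum (fun n => (-1) ^ n * g (n + 1)) (g 0 - s) := by
  have := ((hasSum_nat_add_iff' 1).mpr h).neg
  rw [sum_range_one, pow_zero, one_mul, neg_sub] at this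
  simpa [pow_succ] using this

theorem one_div_sq_mul_add_two_sq_mul_add_four_sq {x : ℝ} (h₀ : x ≠ 0) (h₂ : x + 2 ≠ 0)
    (h₄ : x + 4 ≠ 0) :
    1 / (x ^ 2 * (x + 2) ^ 2 * (x + 4) ^ 2) =
      1 / 64 * (1 / x ^ 2) + 1 / 16 * (1 / (x + 2) ^ 2) + 1 / 64 * (1 / (x + 4) ^ 2) +
        -3 / 128 * (1 / x - 1 / (x + 4)) := by
  field_simp
  ring

theorem summable_of_abs_le_div_succ_sq {g : ℕ → ℝ} (C : ℝ)
    (h : ∀ n : ℕ, |g n| ≤ C / (n + 1) ^ 2) :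
    Summable g := by
  have hbase : Summable fun n : ℕ => C / ((n : ℝ) + 1) ^ 2 := by
    have := (summable_nat_add_iff 1).mpr (Real.summable_one_div_nat_pow.mpr one_lt_two)
    simpa [div_eq_mul_one_div C] using this.mul_left C
  exact .of_norm_bounded hbase h

theorem summable_neg_one_pow_div_two_mul_add_one_sq :
    Summable fun n : ℕ => (-1 : ℝ) ^ n / (2 * n + 1) ^ 2 := by
  refine summable_of_abs_le_div_succ_sq 1 fun n => ?_
  rw [abs_div, abs_neg_one_pow, abs_of_pos (by positivity)]
  gcongr
  linarith [(n.cast_nonneg : (0 : ℝ) ≤ n)]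

theorem hasSum_neg_one_pow_mul_odd_telescope :
    HasSum (fun n : ℕ => (-1 : ℝ) ^ n * (1 / (2 * n + 1) - 1 / (2 * n + 5))) (2 / 3) := by
  set f : ℕ → ℝ := fun n => (-1) ^ n / (2 * n + 1)
  have hf : Tendsto f atTop (𝓝 0) := by
    refine squeeze_zero_norm (fun n => ?_) tendsto_one_div_add_atTop_nhds_zero_nat
    rw [norm_div, norm_pow, norm_neg, norm_one, one_pow, Real.norm_of_nonneg (by positivity)]
    gcongr
    linarith [(n.cast_nonneg : (0 : ℝ) ≤ n)]
  have key : ∀ n : ℕ, f n - f (n + 2) = (-1) ^ n * (1 / (2 * n + 1) - 1 / (2 * n + 5)) := by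
    intro n
    simp only [f]
    push_cast
    ring
  have hs : Summable fun n => f n - f (n + 2) := by
    refine summable_of_abs_le_div_succ_sq 4 fun n => ?_
    have hdiff : 1 / (2 * (n : ℝ) + 1) - 1 / (2 * n + 5) = 4 / ((2 * n + 1) * (2 * n + 5)) := by
      field_simp
      ring
    rw [key, abs_mul, abs_neg_one_pow, one_mul, hdiff, abs_of_pos (by positivity)]
    gcongr
    nlinarith [(n.cast_nonneg : (0 : ℝ) ≤ n)]
  have hsum : f 0 + f 1 = 2 / 3 := by norm_num [f]
  simpa only [key, hsum] using hasSum_sub_add_two_of_tendsto_zero hf hs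

/-- Σ_{n=1}^∞ (-1)^{n-1} / ((2n−1)²(2n+1)²(2n+3)²) = −G/32 + 19/576, where
`G = Σ_{n=1}^∞ (-1)^{n-1}/(2n−1)²` is Catalan's constant.
(All summation indices are shifted: `n : ℕ` here corresponds to `n + 1` in the statement.) -/
theorem sum_alt_three_odd_squares (G : ℝ)
    (hG : G = ∑' n : ℕ, (-1 : ℝ) ^ n / (2 * (n : ℝ) + 1) ^ 2) :
    ∑' n : ℕ, (-1 : ℝ) ^ n /
        ((2 * (n : ℝ) + 1) ^ 2 * (2 * (n : ℝ) + 3) ^ 2 * (2 * (n : ℝ) + 5) ^ 2) =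
      -G / 32 + 19 / 576 := by
  have h₁ : HasSum (fun n : ℕ => (-1 : ℝ) ^ n * (1 / (2 * n + 1) ^ 2)) G := by
    simp_rw [mul_one_div]
    exact hG ▸ summable_neg_one_pow_div_two_mul_add_one_sq.hasSum
  have h₃ : HasSum (fun n : ℕ => (-1 : ℝ) ^ n * (1 / (2 * n + 3) ^ 2)) (1 - G) := by
    convert h₁.neg_one_pow_mul_succ using 1
    · funext n; push_cast; ring
    · norm_num
  have h₅ : HasSum (fun n : ℕ => (-1 : ℝ) ^ n * (1 / (2 * n + 5) ^ 2)) (G - 8 / 9) := by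
    convert h₃.neg_one_pow_mul_succ using 1
    · funext n; push_cast; ring
    · norm_num; ring
  have h := (((h₁.mul_left (1 / 64)).add (h₃.mul_left (1 / 16))).add
    (h₅.mul_left (1 / 64))).add (hasSum_neg_one_pow_mul_odd_telescope.mul_left (-3 / 128))
  rw [show -G / 32 + 19 / 576 = 1 / 64 * G + 1 / 16 * (1 - G) + 1 / 64 * (G - 8 / 9) +
    -3 / 128 * (2 / 3) by ring, ← h.tsum_eq]
  congr 1 with n
  have hpf := one_div_sq_mul_add_two_sq_mul_add_four_sq (x := 2 * n + 1) (by positivity)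
    (by positivity) (by positivity)
  linear_combination (-1 : ℝ) ^ n * hpf
end

section
/- Σ_{n=1}^∞ (-1)^{n-1} / ((2n−1)^2(2n+1)^2(2n+3)^2(2n+5)^2(2n+7)^2) = (3!!)^3·2!/((4!)^4·2^2) · G − 3919/108380160, where G is Catalan's constant and 3!! = 3. -/
/-!
Expand the summand in partial fractions in `x = 2n + 1`. The double poles contribute shifted
copies of the Catalan series with weights `(-1)^k C(4,k)^2 / 147456`, whose total
`6 / 147456 = 1 / 24576` is the coefficient of `G`. The residues at the simple poles are
antisymmetric about `x + 4`, so they pair up into `(-1)^n (1/x - 1/(x+8))` and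
`(-1)^n (1/(x+2) - 1/(x+6))`; these series telescope to `1 - 1/3 + 1/5 - 1/7` and `1/3 - 1/5`.
-/

open Real Filter Finset Topology

theorem hasSum_sub_nat_add_of_tendsto_zero {α : Type*} [AddCommGroup α] [TopologicalSpace α]
    [IsTopologicalAddGroup α] [T2Space α] {h : ℕ → α} (k : ℕ) (h0 : Tendsto h atTop (𝓝 0))
    (hs : Summable fun n => h n - h (n + k)) :
    HasSum (fun n => h n - h (n + k)) (∑ i ∈ range k, h i) := by
  set g : ℕ → α := fun N => ∑ i ∈ range k, h (N + i)
  have hg : ∀ n, h n - h (n + k) = g n - g (n + 1) := fun n => by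
    have : g n + h (n + k) = h n + g (n + 1) := by
      rw [← sum_range_succ (fun i => h (n + i)), sum_range_succ']
      simp only [g, add_assoc, add_comm 1, add_zero, add_comm (h n)]
    rw [sub_eq_sub_iff_add_eq_add, this]
  have hg0 : Tendsto g atTop (𝓝 0) := by
    simpa using tendsto_finsetSum (range k) fun i _ => h0.comp (tendsto_add_atTop_nat i)
  rw [hs.hasSum_iff_tendsto_nat]
  simp_rw [hg, sum_range_sub']
  simpa [g] using tendsto_const_nhds.sub hg0

theorem HasSum.neg_one_pow_mul_nat_add {R : Type*} [Ring R] [TopologicalSpace R]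
    [IsTopologicalRing R] {g : ℕ → R} {S : R} (hS : HasSum (fun n => (-1) ^ n * g n) S) (k : ℕ) :
    HasSum (fun n => (-1) ^ n * g (n + k)) ((-1) ^ k * (S - ∑ i ∈ range k, (-1) ^ i * g i)) := by
  have := ((hasSum_nat_add_iff' k).2 hS).mul_left ((-1) ^ k)
  refine this.congr_fun fun n => ?_
  rw [← mul_assoc, ← pow_add, add_left_comm, ← two_mul, pow_add, pow_mul]
  simp

theorem summable_inv_two_mul_add_sq {a : ℝ} (ha : 0 < a) :
    Summable fun n : ℕ => ((2 * n + a) ^ 2)⁻¹ := by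
  refine (((Real.summable_one_div_nat_add_rpow (a / 2) 2).2 one_lt_two).mul_left (1 / 4)).congr
    fun n => ?_
  rw [abs_of_pos (by positivity), Real.rpow_two]
  field_simp
  ring

theorem tendsto_neg_one_pow_mul_inv_two_mul_add {a : ℝ} (ha : 0 < a) :
    Tendsto (fun n : ℕ => (-1) ^ n * (2 * n + a)⁻¹) atTop (𝓝 0) := by
  have : Tendsto (fun n : ℕ => (2 * n + a)⁻¹) atTop (𝓝 0) :=
    tendsto_inv_atTop_zero.comp <| tendsto_atTop_add_const_right _ a <|
      (tendsto_natCast_atTop_atTop).const_mul_atTop two_pos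
  refine squeeze_zero_norm (fun n => ?_) this
  rw [norm_mul, norm_pow, norm_neg, norm_one, one_pow, one_mul, Real.norm_eq_abs,
    abs_of_pos (by positivity)]

theorem hasSum_neg_one_pow_mul_inv_sub {a : ℝ} (ha : 0 < a) (m : ℕ) :
    HasSum (fun n : ℕ => (-1) ^ n * ((2 * n + a)⁻¹ - (2 * n + 4 * m + a)⁻¹))
      (∑ i ∈ range (2 * m), (-1) ^ i * (2 * i + a)⁻¹) := by
  set h : ℕ → ℝ := fun n => (-1) ^ n * (2 * n + a)⁻¹
  have hh : ∀ n : ℕ, (-1) ^ n * ((2 * n + a)⁻¹ - (2 * n + 4 * m + a)⁻¹) = h n - h (n + 2 * m) :=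
    fun n => by
      simp only [h, pow_add, pow_mul, neg_one_sq, one_pow, mul_one]
      push_cast
      ring_nf
  simp_rw [hh]
  refine hasSum_sub_nat_add_of_tendsto_zero _ (tendsto_neg_one_pow_mul_inv_two_mul_add ha) ?_
  simp_rw [← hh]
  refine ((summable_inv_two_mul_add_sq ha).mul_left (4 * m : ℝ)).of_norm_bounded fun n => ?_
  have hu : 0 < 2 * (n : ℝ) + a := by positivity
  have huv : 2 * (n : ℝ) + a ≤ 2 * n + 4 * m + a := by linarith [(m.cast_nonneg : (0 : ℝ) ≤ m)]
  rw [norm_mul, norm_pow, norm_neg, norm_one, one_pow, one_mul, Real.norm_eq_abs,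
    abs_of_nonneg (sub_nonneg.2 (inv_anti₀ hu huv)), inv_sub_inv hu.ne' (by linarith),
    div_eq_mul_inv, sq]
  gcongr
  linarith

/-- The coefficient of `(x + 2k)⁻²` in the partial fraction expansion of `∏_{j<5} (x + 2j)⁻²`
is `∏_{j≠k} (2j - 2k)⁻² = C(4,k)² / (4⁴ · 4!²)`. -/
theorem neg_one_pow_div_prod_odd_sq_eq (n : ℕ) :
    (-1 : ℝ) ^ n / ((2 * (n : ℝ) + 1) ^ 2 * (2 * (n : ℝ) + 3) ^ 2 * (2 * (n : ℝ) + 5) ^ 2 *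
        (2 * (n : ℝ) + 7) ^ 2 * (2 * (n : ℝ) + 9) ^ 2) =
      ∑ k ∈ range 5, (Nat.choose 4 k : ℝ) ^ 2 / 147456 *
          ((-1 : ℝ) ^ n * ((2 * ((n + k : ℕ) : ℝ) + 1) ^ 2)⁻¹)
        - 25 / 1769472 *
          ((-1 : ℝ) ^ n * ((2 * (n : ℝ) + 1)⁻¹ - (2 * (n : ℝ) + 4 * ((2 : ℕ) : ℝ) + 1)⁻¹))
        - 5 / 55296 *
          ((-1 : ℝ) ^ n * ((2 * (n : ℝ) + 3)⁻¹ - (2 * (n : ℝ) + 4 * ((1 : ℕ) : ℝ) + 3)⁻¹)) := by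
  simp only [sum_range_succ, sum_range_zero, Nat.choose]
  push_cast
  field_simp
  ring

/-- Σ_{n=1}^∞ (-1)^{n-1} / ((2n−1)²(2n+1)²(2n+3)²(2n+5)²(2n+7)²)
      = (3!!)³·2!/((4!)⁴·2²)·G − 3919/108380160, where `3!! = 3` and
`G = Σ_{n=1}^∞ (-1)^{n-1}/(2n−1)²` is Catalan's constant.
(All summation indices are shifted: `n : ℕ` here corresponds to `n + 1` in the statement.) -/
theorem sum_alt_five_odd_squares (G : ℝ)
    (hG : G = ∑' n : ℕ, (-1 : ℝ) ^ n / (2 * (n : ℝ) + 1) ^ 2) :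
    ∑' n : ℕ, (-1 : ℝ) ^ n /
        ((2 * (n : ℝ) + 1) ^ 2 * (2 * (n : ℝ) + 3) ^ 2 * (2 * (n : ℝ) + 5) ^ 2 *
          (2 * (n : ℝ) + 7) ^ 2 * (2 * (n : ℝ) + 9) ^ 2) =
      ((3 : ℝ) ^ 3 * (Nat.factorial 2 : ℝ)) / ((Nat.factorial 4 : ℝ) ^ 4 * 2 ^ 2) * G -
        3919 / 108380160 := by
  have hcat : HasSum (fun n : ℕ => (-1 : ℝ) ^ n * ((2 * (n : ℝ) + 1) ^ 2)⁻¹) G := by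
    simp_rw [hG, div_eq_mul_inv]
    refine ((summable_inv_two_mul_add_sq one_pos).of_norm_bounded fun n => ?_).hasSum
    simp
  have hshift := fun k => hcat.neg_one_pow_mul_nat_add k
  have htele₁ := hasSum_neg_one_pow_mul_inv_sub one_pos 2
  have htele₃ := hasSum_neg_one_pow_mul_inv_sub (by norm_num : (0 : ℝ) < 3) 1
  have hexpansion := ((hasSum_sum (s := range 5) fun k _ =>
      (hshift k).mul_left ((Nat.choose 4 k : ℝ) ^ 2 / 147456)).sub
    (htele₁.mul_left (25 / 1769472))).sub (htele₃.mul_left (5 / 55296))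
  simp_rw [neg_one_pow_div_prod_odd_sq_eq, hexpansion.tsum_eq]
  norm_num [sum_range_succ, Nat.choose, Nat.factorial]
  ring
end

section
/- For every integer k ≥ 0, Σ_{n=1-k}^∞ (-1)^{n-1} / ∏_{j=0}^{2k+1} (2n+2j−1)^2 = (-1)^{k+1} · ( ((k+1)!)^3/(((2k+2)!)^3 · k!) · π − 1/(2·((2k+1)!!)^4) ), where the sum runs over all integers n ≥ 1−k. -/
open Filter Finset Real Topology
open scoped Nat

/-!
Creative telescoping gives an antidifference `G k i`, a rational multiple of the `k`-th summand
`t k i`, whose difference in `i` is `-16 (k+1) (2k+3)³ t (k+1) (i+1) - 2 t k i`. Summing over `i`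
expresses the sum at `k + 1` through the sum at `k` and the rational boundary values `t (k+1) 0`
and `G k 0`, so the `π`-coefficient is divided by `8 (k+1) (2k+3)³` at each step. Induction starts
from `k = 0`, where partial fractions reduce the sum to Leibniz's series for `π / 4`.
-/

lemma Summable.hasSum_of_telescoping {G : Type*} [AddCommGroup G] [TopologicalSpace G]
    [IsTopologicalAddGroup G] [T2Space G] {f g : ℕ → G} (hf : Summable f)
    (hfg : ∀ i, f i = g (i + 1) - g i) (hg : Tendsto g atTop (𝓝 0)) : HasSum f (-g 0) := by
  rw [hf.hasSum_iff_tendsto_nat]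
  simp_rw [hfg, sum_range_sub]
  simpa using hg.sub_const (g 0)

lemma prod_range_two_mul_add_one (k : ℕ) :
    ∏ j ∈ range (k + 1), (2 * (j : ℝ) + 1) = ((2 * k + 1)‼ : ℝ) := by
  simp [Nat.doubleFactorial_eq_prod_odd, prod_range_succ']

noncomputable def risingTwo (x : ℝ) (m : ℕ) : ℝ := ∏ j ∈ range m, (x + 2 * j)

lemma risingTwo_succ (x : ℝ) (m : ℕ) : risingTwo x (m + 1) = risingTwo x m * (x + 2 * m) :=
  prod_range_succ _ _

lemma risingTwo_succ' (x : ℝ) (m : ℕ) : risingTwo x (m + 1) = x * risingTwo (x + 2) m := by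
  rw [risingTwo, risingTwo, prod_range_succ', mul_comm, Nat.cast_zero, mul_zero, add_zero]
  congr 1
  refine prod_congr rfl fun j _ => ?_
  push_cast
  ring

lemma risingTwo_sub_two (x : ℝ) (m : ℕ) :
    risingTwo (x - 2) (m + 2) = (x - 2) * risingTwo x m * (x + 2 * m) := by
  rw [risingTwo_succ', sub_add_cancel, risingTwo_succ, mul_assoc]

lemma one_le_abs_risingTwo {a : ℤ} (ha : Odd a) (m : ℕ) : 1 ≤ |risingTwo a m| := by
  induction m with
  | zero => simp [risingTwo]
  | succ m ih =>
    have hodd : Odd (a + 2 * m) := ha.add_even (even_two_mul _)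
    have hne : a + 2 * m ≠ 0 := fun h0 => by rw [h0] at hodd; exact Int.not_odd_zero hodd
    have hfactor : (1 : ℝ) ≤ |(a : ℝ) + 2 * m| := by exact_mod_cast Int.one_le_abs hne
    rw [risingTwo_succ, abs_mul]
    exact one_le_mul_of_one_le_of_one_le ih hfactor

lemma abs_add_le_abs_risingTwo {a : ℤ} (ha : Odd a) (m : ℕ) :
    |(a : ℝ) + 2 * m| ≤ |risingTwo a (m + 1)| := by
  rw [risingTwo_succ, abs_mul]
  exact le_mul_of_one_le_left (abs_nonneg _) (one_le_abs_risingTwo ha m)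

lemma risingTwo_ne_zero {a : ℤ} (ha : Odd a) (m : ℕ) : risingTwo a m ≠ 0 :=
  abs_pos.mp (one_pos.trans_le (one_le_abs_risingTwo ha m))

lemma mul_risingTwo_add_two (x : ℝ) (m : ℕ) :
    x * risingTwo (x + 2) m = risingTwo x m * (x + 2 * m) := by
  rw [← risingTwo_succ', risingTwo_succ]

-- The paper's summand at `n = i + 1 - k`, so that `2i - 2k + 1 = 2n - 1`.
noncomputable def evenOddTerm (k i : ℕ) : ℝ :=
  (-1) ^ (i + k) / risingTwo (2 * i - 2 * k + 1) (2 * k + 2) ^ 2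

lemma odd_two_mul_sub_two_mul_add_one (i k : ℕ) : Odd (2 * (i : ℤ) - 2 * k + 1) :=
  ⟨i - k, by ring⟩

lemma risingTwo_evenOdd_ne_zero (k i m : ℕ) : risingTwo (2 * i - 2 * k + 1) m ≠ 0 := by
  simpa using risingTwo_ne_zero (odd_two_mul_sub_two_mul_add_one i k) m

lemma abs_evenOddTerm_le (k i : ℕ) : |evenOddTerm k i| ≤ 1 / ((i : ℝ) + 1) ^ 2 := by
  have hlast : 2 * (i : ℝ) + 2 * k + 3 ≤ |risingTwo (2 * i - 2 * k + 1) (2 * k + 1 + 1)| := by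
    have h := abs_add_le_abs_risingTwo (odd_two_mul_sub_two_mul_add_one i k) (2 * k + 1)
    push_cast at h
    rwa [show 2 * (i : ℝ) - 2 * k + 1 + 2 * (2 * k + 1) = 2 * i + 2 * k + 3 by ring,
      abs_of_nonneg (by positivity)] at h
  rw [evenOddTerm, abs_div, abs_pow, abs_neg, abs_one, one_pow, abs_pow]
  gcongr
  linarith [(Nat.cast_nonneg i : (0 : ℝ) ≤ i), (Nat.cast_nonneg k : (0 : ℝ) ≤ k)]

lemma summable_evenOddTerm (k : ℕ) : Summable (evenOddTerm k) := by
  have hsum : Summable fun i : ℕ => 1 / ((i : ℝ) + 1) ^ 2 := by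
    simpa using (summable_nat_add_iff 1).mpr (Real.summable_one_div_nat_pow.mpr one_lt_two)
  exact .of_norm_bounded hsum (abs_evenOddTerm_le k)

lemma evenOddTerm_succ_right (k i : ℕ) :
    evenOddTerm k (i + 1) * (2 * i + 2 * k + 5) ^ 2 =
      -evenOddTerm k i * (2 * i - 2 * k + 1) ^ 2 := by
  have hshift := mul_risingTwo_add_two (2 * i - 2 * k + 1) (2 * k + 2)
  have h0 := risingTwo_evenOdd_ne_zero k i (2 * k + 2)
  have h1 := risingTwo_evenOdd_ne_zero k (i + 1) (2 * k + 2)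
  rw [evenOddTerm, evenOddTerm]
  push_cast at h1 hshift ⊢
  rw [show 2 * ((i : ℝ) + 1) - 2 * k + 1 = 2 * i - 2 * k + 1 + 2 by ring] at h1 ⊢
  set x : ℝ := 2 * i - 2 * k + 1
  set R₀ := risingTwo x (2 * k + 2)
  set R₁ := risingTwo (x + 2) (2 * k + 2)
  rw [show i + 1 + k = i + k + 1 by ring, pow_succ (-1 : ℝ) (i + k)]
  field_simp
  linear_combination (x * R₁ + R₀ * (x + 2 * (2 * k + 2))) * hshift

lemma evenOddTerm_succ_succ (k i : ℕ) :
    evenOddTerm (k + 1) (i + 1) * ((2 * i + 2 * k + 5) ^ 2 * (2 * i + 2 * k + 7) ^ 2) =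
      evenOddTerm k i := by
  have h0 := risingTwo_evenOdd_ne_zero k i (2 * k + 2)
  rw [evenOddTerm, evenOddTerm, show 2 * (k + 1) + 2 = 2 * k + 2 + 1 + 1 by ring,
    risingTwo_succ, risingTwo_succ]
  push_cast at h0 ⊢
  rw [show 2 * ((i : ℝ) + 1) - 2 * (k + 1) + 1 = 2 * i - 2 * k + 1 by ring,
    show 2 * (i : ℝ) - 2 * k + 1 + 2 * (2 * k + 2) = 2 * i + 2 * k + 5 by ring,
    show 2 * (i : ℝ) - 2 * k + 1 + 2 * (2 * k + 3) = 2 * i + 2 * k + 7 by ring]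
  field_simp
  ring

-- Zeilberger's certificate for the recurrence between the sums at `k` and `k + 1`.
noncomputable def evenOddAntidiff (k i : ℕ) : ℝ :=
  evenOddTerm k i * (1 + 4 * (k + 1) * (2 * i + 2 * k + 5 : ℝ)⁻¹ +
    4 * (k + 1) * (2 * k + 3) * (2 * i + 2 * k + 5 : ℝ)⁻¹ ^ 2)

lemma evenOddTerm_telescope (k i : ℕ) :
    -16 * (k + 1) * (2 * k + 3) ^ 3 * evenOddTerm (k + 1) (i + 1) - 2 * evenOddTerm k i =
      evenOddAntidiff k (i + 1) - evenOddAntidiff k i := by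
  have hsucc := eq_div_of_mul_eq (by positivity) (evenOddTerm_succ_right k i)
  have hsucc_succ := eq_div_of_mul_eq (by positivity) (evenOddTerm_succ_succ k i)
  rw [evenOddAntidiff, evenOddAntidiff, hsucc, hsucc_succ]
  push_cast
  field_simp
  ring

lemma tendsto_evenOddAntidiff (k : ℕ) : Tendsto (evenOddAntidiff k) atTop (𝓝 0) := by
  have hinv : Tendsto (fun i : ℕ => (2 * i + 2 * k + 5 : ℝ)⁻¹) atTop (𝓝 0) :=
    tendsto_inv_atTop_zero.comp <| tendsto_atTop_mono (fun i => by linarith [(i.cast_nonneg :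
      (0 : ℝ) ≤ i), (k.cast_nonneg : (0 : ℝ) ≤ k)]) tendsto_natCast_atTop_atTop
  have hfactor := ((tendsto_const_nhds (x := (1 : ℝ))).add
    (hinv.const_mul (4 * (k + 1) : ℝ))).add
      ((hinv.pow 2).const_mul (4 * (k + 1) * (2 * k + 3) : ℝ))
  have h := (summable_evenOddTerm k).tendsto_atTop_zero.mul hfactor
  rwa [zero_mul] at h

lemma tsum_evenOddTerm_succ (k : ℕ) :
    -16 * (k + 1) * (2 * k + 3) ^ 3 * (∑' i, evenOddTerm (k + 1) i - evenOddTerm (k + 1) 0) -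
      2 * ∑' i, evenOddTerm k i = -evenOddAntidiff k 0 := by
  have hshift : Summable fun i => evenOddTerm (k + 1) (i + 1) :=
    (summable_nat_add_iff 1).mpr (summable_evenOddTerm (k + 1))
  have hsum := ((hshift.mul_left _).sub ((summable_evenOddTerm k).mul_left 2)).hasSum_of_telescoping
    (evenOddTerm_telescope k) (tendsto_evenOddAntidiff k)
  rw [← hsum.tsum_eq, Summable.tsum_sub (hshift.mul_left _) ((summable_evenOddTerm k).mul_left 2),
    tsum_mul_left, tsum_mul_left, (summable_evenOddTerm (k + 1)).tsum_eq_zero_add,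
    add_sub_cancel_left]

-- The factors are `-(2k - 1), …, -1, 1, …, 2k + 1, 2k + 3`.
lemma risingTwo_one_sub_two_mul_sq (k : ℕ) :
    risingTwo (1 - 2 * k) (2 * k + 2) ^ 2 * (2 * k + 1) ^ 2 =
      ((2 * k + 1)‼ : ℝ) ^ 4 * (2 * k + 3) ^ 2 := by
  induction k with
  | zero => norm_num [risingTwo, prod_range_succ]
  | succ k ih =>
    rw [show 1 - 2 * ((k + 1 : ℕ) : ℝ) = 1 - 2 * k - 2 by push_cast; ring, risingTwo_sub_two,
      show 2 * (k + 1) + 1 = 2 * k + 1 + 2 by ring, Nat.doubleFactorial_add_two]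
    push_cast
    linear_combination (2 * (k : ℝ) + 5) ^ 2 * (2 * k + 3) ^ 2 * ih

lemma evenOddTerm_zero_right (k : ℕ) :
    evenOddTerm k 0 =
      (-1) ^ k * (2 * k + 1) ^ 2 / (((2 * k + 1)‼ : ℝ) ^ 4 * (2 * k + 3) ^ 2) := by
  have hR := risingTwo_one_sub_two_mul_sq k
  have hR0 := risingTwo_evenOdd_ne_zero k 0 (2 * k + 2)
  rw [evenOddTerm, zero_add, ← hR]
  push_cast at hR0 ⊢
  rw [show (2 * 0 - 2 * k + 1 : ℝ) = 1 - 2 * k by ring] at hR0 ⊢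
  field_simp

lemma tsum_evenOddTerm_zero : ∑' i, evenOddTerm 0 i = 1 / 2 - π / 8 := by
  set u : ℕ → ℝ := fun i => (-1) ^ i / (2 * i + 1) ^ 2
  set v : ℕ → ℝ := fun i => (-1) ^ i / (2 * i + 1)
  -- `1 / (a (a + 2))² = (1 / a² + 1 / (a + 2)²) / 4 - (1 / a - 1 / (a + 2)) / 4`, `a = 2i + 1`
  have hterm (i : ℕ) : evenOddTerm 0 i = (u i - u (i + 1)) / 4 - (v i + v (i + 1)) / 4 := by
    simp only [evenOddTerm, risingTwo, u, v, prod_range_succ, prod_range_zero]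
    push_cast
    rw [show 2 * (i : ℝ) - 2 * 0 + 1 + 2 * 0 = 2 * i + 1 by ring,
      show 2 * (i : ℝ) - 2 * 0 + 1 + 2 * 1 = 2 * i + 3 by ring,
      show 2 * ((i : ℝ) + 1) + 1 = 2 * i + 3 by ring, one_mul, add_zero, pow_succ]
    field_simp
    ring
  have hpartial (N : ℕ) : ∑ i ∈ range N, evenOddTerm 0 i =
      (u 0 - u N) / 4 - (∑ i ∈ range N, v i + ∑ i ∈ range (N + 1), v i - v 0) / 4 := by
    simp_rw [hterm, sum_sub_distrib, ← sum_div, sum_range_sub', sum_add_distrib,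
      sum_range_succ' v N]
    ring
  have hu : Tendsto u atTop (𝓝 0) := by
    refine squeeze_zero_norm (fun N => ?_) tendsto_one_div_add_atTop_nhds_zero_nat
    simp only [u, norm_div, norm_pow, norm_neg, norm_one, one_pow, Real.norm_eq_abs]
    rw [abs_of_pos (by positivity)]
    gcongr
    nlinarith [(N.cast_nonneg : (0 : ℝ) ≤ N)]
  have hv := Real.tendsto_sum_pi_div_four
  refine ((summable_evenOddTerm 0).hasSum_iff_tendsto_nat.mpr ?_).tsum_eq
  simp_rw [hpartial]
  convert (((tendsto_const_nhds (x := u 0)).sub hu).div_const 4).sub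
    (((hv.add (hv.comp (tendsto_add_atTop_nat 1))).sub_const (v 0)).div_const 4) using 2
  norm_num [u, v]
  ring

lemma tsum_evenOddTerm (k : ℕ) :
    ∑' i, evenOddTerm k i = (-1) ^ (k + 1) *
      (((k + 1)! : ℝ) ^ 3 / (((2 * k + 2)! : ℝ) ^ 3 * k !) * π -
        1 / (2 * ((2 * k + 1)‼ : ℝ) ^ 4)) := by
  induction k with
  | zero =>
    rw [tsum_evenOddTerm_zero]
    norm_num
    ring
  | succ k ih =>
    have hA : (-16 * (k + 1) * (2 * k + 3) ^ 3 : ℝ) ≠ 0 := by positivity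
    have hS : ∑' i, evenOddTerm (k + 1) i = evenOddTerm (k + 1) 0 +
          (2 * ∑' i, evenOddTerm k i - evenOddAntidiff k 0) /
            (-16 * (k + 1) * (2 * k + 3) ^ 3) := by
      have hrec := tsum_evenOddTerm_succ k
      field_simp
      linarith
    rw [hS, ih, evenOddAntidiff, evenOddTerm_zero_right, evenOddTerm_zero_right,
      show 2 * (k + 1) + 2 = 2 * k + 2 + 1 + 1 by ring,
      show 2 * (k + 1) + 1 = 2 * k + 1 + 2 by ring, Nat.factorial_succ (2 * k + 2 + 1),
      Nat.factorial_succ (2 * k + 2), Nat.factorial_succ (k + 1), Nat.factorial_succ k,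
      Nat.doubleFactorial_add_two]
    push_cast
    field_simp
    ring

/-- For every integer `k ≥ 0`,
`Σ_{n=1-k}^∞ (-1)^{n-1} / ∏_{j=0}^{2k+1} (2n+2j−1)²
  = (-1)^{k+1}·( ((k+1)!)³/(((2k+2)!)³·k!)·π − 1/(2·((2k+1)!!)⁴) )`,
where `(2k+1)!! = ∏_{j=0}^{k} (2j+1)`.
The summation index is shifted: `i : ℕ` corresponds to `n = i + 1 − k`, so that
`(-1)^{n-1} = (-1)^{i+k}` and `2n+2j−1 = 2i+2j−2k+1`. -/
theorem general_even_odd_squares_sum (k : ℕ) :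
    ∑' i : ℕ, (-1 : ℝ) ^ (i + k) /
        ∏ j ∈ Finset.range (2 * k + 2), (2 * (i : ℝ) + 2 * (j : ℝ) - 2 * (k : ℝ) + 1) ^ 2 =
      (-1 : ℝ) ^ (k + 1) *
        (((Nat.factorial (k + 1) : ℝ) ^ 3 /
            ((Nat.factorial (2 * k + 2) : ℝ) ^ 3 * (Nat.factorial k : ℝ))) * π -
          1 / (2 * (∏ j ∈ Finset.range (k + 1), (2 * (j : ℝ) + 1)) ^ 4)) := by
  have hprod (i : ℕ) : ∏ j ∈ range (2 * k + 2), (2 * (i : ℝ) + 2 * j - 2 * k + 1) ^ 2 =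
      risingTwo (2 * i - 2 * k + 1) (2 * k + 2) ^ 2 := by
    rw [risingTwo, ← prod_pow]
    exact prod_congr rfl fun j _ => by ring
  simp_rw [hprod, prod_range_two_mul_add_one]
  exact tsum_evenOddTerm k
end

section
/- Σ_{n=1}^∞ (-1)^{n-1} / ((4(n−1)^2+3)(4n^2+3)(2n−1)^2) = G/16 − 1/96, where G is Catalan's constant. -/
open Real

private lemma aux_summable (f : ℕ → ℝ) (hf : ∀ n : ℕ, ((n : ℝ) + 1) ^ 2 ≤ f n) :
    Summable (fun n : ℕ => (-1 : ℝ) ^ n / f n) := by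
  rw [← summable_abs_iff]
  have h1 : Summable (fun n : ℕ => 1 / ((n : ℝ) + 1) ^ 2) := by
    have := (summable_nat_add_iff 1).mpr <| Real.summable_one_div_nat_pow.mpr one_lt_two
    exact this.congr fun n => by push_cast; ring_nf
  refine Summable.of_nonneg_of_le (fun n => abs_nonneg _) (fun n => ?_) h1
  have hn : (0:ℝ) < ((n : ℝ) + 1) ^ 2 := by positivity
  have hd : (0:ℝ) < f n := lt_of_lt_of_le hn (hf n)
  rw [abs_div, abs_pow, abs_neg, abs_one, one_pow, abs_of_pos hd]
  exact div_le_div_of_nonneg_left one_pos.le hn (hf n)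

/-- Σ_{n=1}^∞ (-1)^{n-1} / ((4(n−1)²+3)(4n²+3)(2n−1)²) = G/16 − 1/96, where
`G = Σ_{n=1}^∞ (-1)^{n-1}/(2n−1)²` is Catalan's constant.
(All summation indices are shifted: `n : ℕ` here corresponds to `n + 1` in the statement.) -/
theorem sum_alt_quartic_factors (G : ℝ)
    (hG : G = ∑' n : ℕ, (-1 : ℝ) ^ n / (2 * (n : ℝ) + 1) ^ 2) :
    ∑' n : ℕ, (-1 : ℝ) ^ n /
        ((4 * (n : ℝ) ^ 2 + 3) * (4 * ((n : ℝ) + 1) ^ 2 + 3) * (2 * (n : ℝ) + 1) ^ 2) =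
      G / 16 - 1 / 96 := by
  set a : ℕ → ℝ := fun n => (-1 : ℝ) ^ n / (4 * (n : ℝ) ^ 2 + 3) with ha_def
  set g : ℕ → ℝ := fun n => (-1 : ℝ) ^ n / (2 * (n : ℝ) + 1) ^ 2 with hg_def
  have ha : Summable a := aux_summable _ fun n => by nlinarith [sq_nonneg ((n:ℝ) - 1), sq_nonneg (n:ℝ)]
  have hg : Summable g := aux_summable _ fun n => by nlinarith [sq_nonneg (n:ℝ), (Nat.cast_nonneg n : (0:ℝ) ≤ n)]
  -- a tends to 0
  have ha0 : Filter.Tendsto a Filter.atTop (nhds 0) := ha.tendsto_atTop_zero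
  have ha1 : Summable (fun n => a (n + 1)) := (summable_nat_add_iff 1).mpr ha
  have hd : Summable (fun n => a n - a (n + 1)) := ha.sub ha1
  -- telescoping value
  have htel : ∑' n, (a n - a (n + 1)) = 1 / 3 := by
    have h1 : Filter.Tendsto (fun N => ∑ i ∈ Finset.range N, (a i - a (i + 1)))
        Filter.atTop (nhds (∑' n, (a n - a (n + 1)))) := hd.hasSum.tendsto_sum_nat
    have h2 : Filter.Tendsto (fun N => ∑ i ∈ Finset.range N, (a i - a (i + 1)))
        Filter.atTop (nhds (a 0 - 0)) := by
      simp only [Finset.sum_range_sub' a]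
      exact Filter.Tendsto.const_sub _ ha0
    have := tendsto_nhds_unique h1 h2
    rw [this]
    norm_num [ha_def]
  -- pointwise identity
  have hpt : ∀ n : ℕ, (-1 : ℝ) ^ n /
        ((4 * (n : ℝ) ^ 2 + 3) * (4 * ((n : ℝ) + 1) ^ 2 + 3) * (2 * (n : ℝ) + 1) ^ 2)
      = (1 / 16) * g n - (1 / 32) * (a n - a (n + 1)) := by
    intro n
    simp only [ha_def, hg_def]
    have h1 : (4 * (n : ℝ) ^ 2 + 3) ≠ 0 := by positivity
    have h2 : (4 * ((n : ℝ) + 1) ^ 2 + 3) ≠ 0 := by positivity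
    have h3 : ((2 * (n : ℝ) + 1) ^ 2) ≠ 0 := by positivity
    have h4 : (4 * ((n : ℝ) + 1) ^ 2 + 3) = 4 * ((n + 1 : ℕ) : ℝ) ^ 2 + 3 := by push_cast; ring
    rw [← h4, pow_succ]
    field_simp
    ring
  calc ∑' n : ℕ, (-1 : ℝ) ^ n /
        ((4 * (n : ℝ) ^ 2 + 3) * (4 * ((n : ℝ) + 1) ^ 2 + 3) * (2 * (n : ℝ) + 1) ^ 2)
      = ∑' n, ((1 / 16) * g n - (1 / 32) * (a n - a (n + 1))) := by
        exact tsum_congr hpt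
    _ = (1 / 16) * (∑' n, g n) - (1 / 32) * (∑' n, (a n - a (n + 1))) := by
        rw [Summable.tsum_sub (hg.mul_left _) (hd.mul_left _), tsum_mul_left, tsum_mul_left]
    _ = G / 16 - 1 / 96 := by rw [htel, ← hG]; ring
end
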